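/- arXiv:math/9201269 — 9 statements merged into one kernel-verified Lean document; each statement's English description precedes it below -/
import Mathlib

section
/- Let d ≥ 1 and n ≥ 1. Consider adaptively chosen evaluation points: a fixed point x_1 ∈ [0,1]^d and maps ψ_i : ℝ^i → [0,1]^d for i = 1, …, n−1, so that for a continuous f : [0,1]^d → ℝ the points are defined recursively by x_{i+1}(f) = ψ_i(f(x_1), …, f(x_i(f))). Then for every algorithm φ : ℝ^n → ℝ, sup over all continuous f : [0,1]^d → ℝ with |f(t)| ≤ 1 for all t ∈ [0,1]^d of |∫_{[0,1]^d} f(t) dt − φ(f(x_1), …, f(x_n(f)))| ≥ 1. Thus adaption does not help: integration of continuous functions cannot be solved in the worst case even with adaptively chosen function values. -/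
/-!
Let `p₀, …, p_{n-1}` be the points the method samples for `f = 0`. Any `f` vanishing at these
points is sampled at the same points, so the algorithm returns the same number `a` for `f` as
for `0`. A continuous `g` with `0 ≤ g ≤ 1`, vanishing at the `pᵢ` and equal to `1` outside small
balls around them (of total volume at most `n (2r)^d`), has integral arbitrarily close to `1`;
one of `g` and `-g` has error at least `∫ g` because it lies on the other side of `a`.
-/

open MeasureTheory Metric Filter Topology
open scoped ENNReal

lemma Finset.one_sub_prod_le_sum_one_sub {ι : Type*} (s : Finset ι) (a : ι → ℝ)
    (h0 : ∀ i ∈ s, 0 ≤ a i) (h1 : ∀ i ∈ s, a i ≤ 1) :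
    1 - ∏ i ∈ s, a i ≤ ∑ i ∈ s, (1 - a i) := by
  classical
  induction s using Finset.induction with
  | empty => simp
  | insert j s hj ih =>
    rw [Finset.forall_mem_insert] at h0 h1
    rw [Finset.prod_insert hj, Finset.sum_insert hj]
    have hprod_nonneg : 0 ≤ ∏ i ∈ s, a i := Finset.prod_nonneg h0.2
    have hprod_le : ∏ i ∈ s, a i ≤ 1 := Finset.prod_le_one h0.2 h1.2
    nlinarith [ih h0.2 h1.2]

section Notch

variable {E : Type*} [PseudoMetricSpace E] {n : ℕ}

noncomputable def notch (p : Fin n → E) (r : ℝ) (t : E) : ℝ :=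
  ∏ i, min 1 (dist t (p i) / r)

variable (p : Fin n → E) {r : ℝ}

lemma continuous_notch : Continuous (notch p r) :=
  continuous_finsetProd _ fun _ _ =>
    continuous_const.min ((continuous_id.dist continuous_const).div_const r)

lemma notch_factor_nonneg (hr : 0 ≤ r) (t : E) (i : Fin n) : 0 ≤ min 1 (dist t (p i) / r) :=
  le_min zero_le_one (div_nonneg dist_nonneg hr)

lemma notch_nonneg (hr : 0 ≤ r) (t : E) : 0 ≤ notch p r t :=
  Finset.prod_nonneg fun i _ => notch_factor_nonneg p hr t i

lemma notch_le_one (hr : 0 ≤ r) (t : E) : notch p r t ≤ 1 :=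
  Finset.prod_le_one (fun i _ => notch_factor_nonneg p hr t i) fun _ _ => min_le_left _ _

lemma notch_apply_self (i : Fin n) : notch p r (p i) = 0 :=
  Finset.prod_eq_zero (Finset.mem_univ i) (by simp)

lemma one_sub_notch_le_sum_indicator (hr : 0 < r) (t : E) :
    1 - notch p r t ≤ ∑ i, (closedBall (p i) r).indicator 1 t := by
  refine (Finset.one_sub_prod_le_sum_one_sub _ _ (fun i _ => notch_factor_nonneg p hr.le t i)
    fun _ _ => min_le_left _ _).trans (Finset.sum_le_sum fun i _ => ?_)
  by_cases hball : t ∈ closedBall (p i) r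
  · rw [Set.indicator_of_mem hball, Pi.one_apply]
    linarith [notch_factor_nonneg p hr.le t i]
  · have hfar : 1 ≤ dist t (p i) / r := (one_le_div hr).2 (not_le.1 hball).le
    rw [Set.indicator_of_notMem hball, min_eq_left hfar, sub_self]

lemma setIntegral_notch_ge [MeasurableSpace E] [OpensMeasurableSpace E] (μ : Measure E)
    {s : Set E} (hs : MeasurableSet s) (hμs : μ s ≠ ∞) (hr : 0 < r) :
    μ.real s - ∑ i, μ.real (closedBall (p i) r ∩ s) ≤ ∫ t in s, notch p r t ∂μ := by
  have : IsFiniteMeasure (μ.restrict s) := isFiniteMeasure_restrict.2 hμs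
  have hnotch : IntegrableOn (notch p r) s μ :=
    Measure.integrableOn_of_bounded hμs (continuous_notch p).aestronglyMeasurable (M := 1)
      (ae_of_all _ fun t => by
        rw [Real.norm_eq_abs, abs_of_nonneg (notch_nonneg p hr.le t)]
        exact notch_le_one p hr.le t)
  have hballs : ∀ i, Integrable ((closedBall (p i) r).indicator (1 : E → ℝ)) (μ.restrict s) :=
    fun i => (integrable_const 1).indicator measurableSet_closedBall
  calc μ.real s - ∑ i, μ.real (closedBall (p i) r ∩ s)
      = ∫ t in s, (1 - ∑ i, (closedBall (p i) r).indicator 1 t) ∂μ := by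
        rw [integral_sub (integrable_const 1) (integrable_finsetSum _ fun i _ => hballs i),
          integral_finsetSum _ fun i _ => hballs i]
        simp [integral_indicator_one measurableSet_closedBall, Measure.real,
          Measure.restrict_apply measurableSet_closedBall]
    _ ≤ ∫ t in s, notch p r t ∂μ :=
        setIntegral_mono_on ((integrable_const 1).sub (integrable_finsetSum _ fun i _ => hballs i))
          hnotch hs fun t _ => by linarith [one_sub_notch_le_sum_indicator p hr t]

end Notch

lemma exists_pos_lt_setIntegral_notch_Icc {n d : ℕ} (hd : d ≠ 0) (p : Fin n → Fin d → ℝ)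
    {c : ℝ} (hc : c < 1) : ∃ r > 0, c < ∫ t in Set.Icc (0 : Fin d → ℝ) 1, notch p r t := by
  have hsmall : Tendsto (fun r : ℝ => n * (2 * r) ^ d) (𝓝[>] 0) (𝓝 0) := by
    have : Tendsto (fun r : ℝ => n * (2 * r) ^ d) (𝓝 0) (𝓝 (n * (2 * 0) ^ d)) :=
      (by fun_prop : Continuous fun r : ℝ => n * (2 * r) ^ d).tendsto 0
    simpa [hd] using this.mono_left nhdsWithin_le_nhds
  obtain ⟨r, hr_small, hr⟩ :=
    ((hsmall.eventually_lt_const (sub_pos.2 hc)).and self_mem_nhdsWithin).exists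
  refine ⟨r, hr, ?_⟩
  have hcube : volume.real (Set.Icc (0 : Fin d → ℝ) 1) = 1 := by
    simp [Measure.real, Real.volume_Icc_pi]
  have hball (i : Fin n) : volume.real (closedBall (p i) r ∩ Set.Icc 0 1) ≤ (2 * r) ^ d := by
    refine (measureReal_mono Set.inter_subset_left measure_closedBall_lt_top.ne).trans_eq ?_
    simp [Measure.real, Real.volume_pi_closedBall _ hr.le, hr.le]
  calc c < 1 - n * (2 * r) ^ d := by linarith
    _ ≤ volume.real (Set.Icc (0 : Fin d → ℝ) 1)
          - ∑ i, volume.real (closedBall (p i) r ∩ Set.Icc 0 1) := by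
        rw [hcube]
        gcongr
        simpa using Finset.sum_le_card_nsmul Finset.univ _ _ fun i _ => hball i
    _ ≤ ∫ t in Set.Icc (0 : Fin d → ℝ) 1, notch p r t :=
        setIntegral_notch_ge p volume measurableSet_Icc (by simp [Real.volume_Icc_pi]) hr

section Adaptive

variable {X Y : Type*} {x₁ : X} {ψ : (i : ℕ) → (Fin (i + 1) → Y) → X} {pt : (X → Y) → ℕ → X}

lemma adaptivePoints_eq_of_agree (hpt0 : ∀ f, pt f 0 = x₁)
    (hptsucc : ∀ f i, pt f (i + 1) = ψ i (fun j : Fin (i + 1) => f (pt f j.1)))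
    {f g : X → Y} {n : ℕ} (hfg : ∀ i < n, f (pt g i) = g (pt g i)) :
    ∀ i < n, pt f i = pt g i := by
  intro i
  induction i using Nat.strong_induction_on with
  | _ i ih =>
    intro hi
    cases i with
    | zero => rw [hpt0, hpt0]
    | succ k =>
      rw [hptsucc, hptsucc]
      congr 1
      funext j
      have hj : j.1 < n := j.2.trans hi
      rw [ih j j.2 hj, hfg j hj]

lemma adaptiveInfo_eq_of_agree (hpt0 : ∀ f, pt f 0 = x₁)
    (hptsucc : ∀ f i, pt f (i + 1) = ψ i (fun j : Fin (i + 1) => f (pt f j.1)))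
    {f g : X → Y} {n : ℕ} (hfg : ∀ i < n, f (pt g i) = g (pt g i)) :
    (fun i : Fin n => f (pt f i.1)) = fun i => g (pt g i.1) :=
  funext fun i => by rw [adaptivePoints_eq_of_agree hpt0 hptsucc hfg i i.2, hfg i i.2]

end Adaptive

theorem stmt_1_general (d n : ℕ) (hd : 1 ≤ d)
    (x₁ : Fin d → ℝ)
    (ψ : (i : ℕ) → (Fin (i + 1) → ℝ) → (Fin d → ℝ))
    (pt : ((Fin d → ℝ) → ℝ) → ℕ → (Fin d → ℝ))
    (hpt0 : ∀ f, pt f 0 = x₁)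
    (hptsucc : ∀ f i, pt f (i + 1) = ψ i (fun j : Fin (i + 1) => f (pt f j.1)))
    (φ : (Fin n → ℝ) → ℝ) :
    ∀ c : ℝ, c < 1 →
      ∃ f : (Fin d → ℝ) → ℝ, Continuous f ∧
        (∀ t ∈ Set.Icc (0 : Fin d → ℝ) 1, |f t| ≤ 1) ∧
        c < |(∫ t in Set.Icc (0 : Fin d → ℝ) 1, f t) - φ (fun i => f (pt f i.1))| := by
  intro c hc
  set p : Fin n → Fin d → ℝ := fun i => pt 0 i.1
  obtain ⟨r, hr, hI⟩ := exists_pos_lt_setIntegral_notch_Icc (by omega) p hc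
  have hinfo (f : (Fin d → ℝ) → ℝ) (hf : ∀ i, f (p i) = 0) :
      (fun i : Fin n => f (pt f i.1)) = fun _ => 0 :=
    adaptiveInfo_eq_of_agree (g := 0) hpt0 hptsucc fun i hi => hf ⟨i, hi⟩
  have hbound (t : Fin d → ℝ) : |notch p r t| ≤ 1 := by
    rw [abs_of_nonneg (notch_nonneg p hr.le t)]
    exact notch_le_one p hr.le t
  rcases le_or_gt (φ fun _ => 0) 0 with ha | ha
  · refine ⟨notch p r, continuous_notch p, fun t _ => hbound t, ?_⟩
    rw [hinfo _ (notch_apply_self p)]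
    exact hI.trans_le ((le_sub_self_iff _).2 ha |>.trans (le_abs_self _))
  · refine ⟨-notch p r, (continuous_notch p).neg, fun t _ => by simpa using hbound t, ?_⟩
    rw [hinfo _ fun i => by simp [notch_apply_self], ← abs_neg]
    simp only [Pi.neg_apply, integral_neg, neg_sub, sub_neg_eq_add]
    exact hI.trans_le ((le_add_of_nonneg_left ha.le).trans (le_abs_self _))

/-- **Adaption does not help for integration of continuous functions.**
Evaluation points are chosen adaptively: `x₁` is fixed and the `(i+1)`-st point is
`ψ i` applied to the previously computed function values (this is encoded by the
point functional `pt` together with its recurrence).  For every algorithm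
`φ : ℝ^n → ℝ` the worst-case error over the unit ball of continuous functions is
at least `1`. -/
theorem stmt_1 (d n : ℕ) (hd : 1 ≤ d) (hn : 1 ≤ n)
    (x₁ : Fin d → ℝ) (hx₁ : x₁ ∈ Set.Icc (0 : Fin d → ℝ) 1)
    (ψ : (i : ℕ) → (Fin (i + 1) → ℝ) → (Fin d → ℝ))
    (hψ : ∀ i v, ψ i v ∈ Set.Icc (0 : Fin d → ℝ) 1)
    (pt : ((Fin d → ℝ) → ℝ) → ℕ → (Fin d → ℝ))
    (hpt0 : ∀ f, pt f 0 = x₁)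
    (hptsucc : ∀ f i, pt f (i + 1) = ψ i (fun j : Fin (i + 1) => f (pt f j.1)))
    (φ : (Fin n → ℝ) → ℝ) :
    ∀ c : ℝ, c < 1 →
      ∃ f : (Fin d → ℝ) → ℝ, Continuous f ∧
        (∀ t ∈ Set.Icc (0 : Fin d → ℝ) 1, |f t| ≤ 1) ∧
        c < |(∫ t in Set.Icc (0 : Fin d → ℝ) 1, f t) - φ (fun i => f (pt f i.1))| :=
  stmt_1_general d n hd x₁ ψ pt hpt0 hptsucc φ
end

section
/- Let n ≥ 2, let ε ∈ (0,1), and let 1 ≤ k ≤ n−1. Consider any adaptive information of cardinality k using matrix-vector multiplications: a vector z_1 ∈ ℝ^n and maps ψ_i : (ℝ^n)^i → ℝ^n for i = 1, …, k−1, which for an n×n real symmetric matrix A determine y_1(A) = A z_1 and y_{i+1}(A) = A ψ_i(y_1(A), …, y_i(A)). Then for every algorithm φ : (ℝ^n)^k → ℝ there exists a nonzero n×n real symmetric matrix A such that |λ_max(A) − φ(y_1(A), …, y_k(A))| > ε ‖A‖, where λ_max(A) is the largest eigenvalue of A. That is, the largest eigenvalue of a symmetric matrix cannot be approximated to within ε‖A‖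 for all symmetric A using fewer than n matrix-vector multiplications. -/
/-!
On a matrix `A` that annihilates the vectors `q₁, …, q_k` queried when every answer is zero,
the adaptive information sees only zeros, so the algorithm returns the fixed value
`r = φ(0, …, 0)`. Since `k < n`, there is a unit vector `u` orthogonal to `q₁, …, q_k`, and
`A = c u uᵀ` annihilates them while `λ_max(A) = ‖A‖ = c`; any `c > 0` with
`(1 - ε) c > |r|` makes the error `|c - r|` exceed `ε c`.
-/

/-- The Euclidean norm on `ℝ^n`. -/
noncomputable def euclNorm {n : ℕ} (v : Fin n → ℝ) : ℝ := Real.sqrt (∑ i, v i ^ 2)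

/-- The spectral norm of an `n × n` real matrix: the operator norm induced by the
Euclidean norm. -/
noncomputable def specNorm {n : ℕ} (A : Matrix (Fin n) (Fin n) ℝ) : ℝ :=
  ‖LinearMap.toContinuousLinearMap (Matrix.toEuclideanLin A)‖

/-- The largest eigenvalue of a real matrix (for a symmetric matrix this is the
maximum of the real spectrum). -/
noncomputable def lamMax {n : ℕ} (A : Matrix (Fin n) (Fin n) ℝ) : ℝ :=
  sSup {μ : ℝ | ∃ v : Fin n → ℝ, v ≠ 0 ∧ A.mulVec v = μ • v}

open Matrix

def zeroAnswerQueries {V W : Type*} [Zero W] (z₁ : V) (ψ : (i : ℕ) → (Fin (i + 1) → W) → V) :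
    ℕ → V
  | 0 => z₁
  | i + 1 => ψ i 0

theorem answers_eq_zero_of_map_zeroAnswerQueries {V W : Type*} [Zero W] {z₁ : V}
    {ψ : (i : ℕ) → (Fin (i + 1) → W) → V} {F : V → W} {y : ℕ → W}
    (hy0 : y 0 = F z₁) (hysucc : ∀ i, y (i + 1) = F (ψ i fun j => y j)) {k : ℕ}
    (hF : ∀ i < k, F (zeroAnswerQueries z₁ ψ i) = 0) : ∀ i < k, y i = 0 := by
  intro i
  induction i using Nat.strong_induction_on with
  | _ i ih =>
    intro hik
    cases i with
    | zero => rw [hy0]; exact hF 0 hik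
    | succ i =>
      have hprev : (fun j : Fin (i + 1) => y j) = 0 := funext fun j => ih j (by omega) (by omega)
      rw [hysucc, hprev]
      exact hF (i + 1) hik

theorem exists_ne_zero_forall_dotProduct_eq_zero {K ι m : Type*} [Field K] [Fintype ι]
    [Fintype m] (v : ι → m → K) (h : Fintype.card ι < Fintype.card m) :
    ∃ w : m → K, w ≠ 0 ∧ ∀ i, v i ⬝ᵥ w = 0 := by
  have hker : LinearMap.ker (Matrix.of v).mulVecLin ≠ ⊥ :=
    LinearMap.ker_ne_bot_of_finrank_lt (by simpa using h)
  obtain ⟨w, hw, hw0⟩ := (Submodule.ne_bot_iff _).mp hker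
  exact ⟨w, hw0, fun i => congr_fun hw i⟩

theorem exists_dotProduct_self_eq_one_forall_dotProduct_eq_zero {ι m : Type*} [Fintype ι]
    [Fintype m] (v : ι → m → ℝ) (h : Fintype.card ι < Fintype.card m) :
    ∃ u : m → ℝ, u ⬝ᵥ u = 1 ∧ ∀ i, v i ⬝ᵥ u = 0 := by
  obtain ⟨w, hw0, hw⟩ := exists_ne_zero_forall_dotProduct_eq_zero v h
  have hpos : 0 < w ⬝ᵥ w := by simpa using dotProduct_self_star_pos_iff.mpr hw0
  refine ⟨(√(w ⬝ᵥ w))⁻¹ • w, ?_, fun i => by rw [dotProduct_smul, hw, smul_zero]⟩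
  rw [smul_dotProduct, dotProduct_smul, smul_smul, smul_eq_mul, ← mul_inv,
    Real.mul_self_sqrt hpos.le, inv_mul_cancel₀ hpos.ne']

theorem smul_vecMulVec_self_mulVec {R m : Type*} [CommSemiring R] [Fintype m] (c : R)
    (u v : m → R) : (c • vecMulVec u u) *ᵥ v = (c * (u ⬝ᵥ v)) • u := by
  rw [smul_mulVec, vecMulVec_mulVec, op_smul_eq_smul, smul_smul]

theorem eq_zero_or_eq_of_smul_vecMulVec_self_mulVec_eq_smul {K m : Type*} [Field K] [Fintype m]
    {c μ : K} {u v : m → K} (hu : u ⬝ᵥ u = 1) (hv : v ≠ 0)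
    (h : (c • vecMulVec u u) *ᵥ v = μ • v) : μ = 0 ∨ μ = c := by
  rw [smul_vecMulVec_self_mulVec] at h
  by_cases huv : u ⬝ᵥ v = 0
  · rw [huv, mul_zero, zero_smul, eq_comm, smul_eq_zero] at h
    exact .inl (h.resolve_right hv)
  · have hdot := congr_arg (u ⬝ᵥ ·) h
    simp only [dotProduct_smul, hu, smul_eq_mul, mul_one] at hdot
    exact .inr (mul_right_cancel₀ huv hdot).symm

theorem lamMax_smul_vecMulVec_self {n : ℕ} {c : ℝ} {u : Fin n → ℝ} (hu : u ⬝ᵥ u = 1)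
    (hc : 0 ≤ c) : lamMax (c • vecMulVec u u) = c := by
  refine IsGreatest.csSup_eq ⟨⟨u, ?_, ?_⟩, ?_⟩
  · rintro rfl
    rw [zero_dotProduct] at hu
    exact zero_ne_one hu
  · rw [smul_vecMulVec_self_mulVec, hu, mul_one]
  · rintro μ ⟨v, hv, h⟩
    rcases eq_zero_or_eq_of_smul_vecMulVec_self_mulVec_eq_smul hu hv h with rfl | rfl
    exacts [hc, le_rfl]

theorem norm_toLp_eq_sqrt_dotProduct {m : Type*} [Fintype m] (u : m → ℝ) :
    ‖WithLp.toLp 2 u‖ = √(u ⬝ᵥ u) := by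
  rw [norm_eq_sqrt_real_inner, EuclideanSpace.inner_toLp_toLp, star_trivial]

theorem specNorm_vecMulVec {n : ℕ} (u v : Fin n → ℝ) :
    specNorm (vecMulVec u v) = √(u ⬝ᵥ u) * √(v ⬝ᵥ v) := by
  have h := InnerProductSpace.symm_toEuclideanLin_rankOne (WithLp.toLp 2 u) (WithLp.toLp 2 v)
  rw [star_trivial, LinearEquiv.symm_apply_eq] at h
  rw [specNorm, ← h]
  -- `toContinuousLinearMap` sends a coerced continuous linear map to itself definitionally
  change ‖InnerProductSpace.rankOne ℝ (WithLp.toLp 2 u) (WithLp.toLp 2 v)‖ = _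
  rw [InnerProductSpace.norm_rankOne, norm_toLp_eq_sqrt_dotProduct, norm_toLp_eq_sqrt_dotProduct]

theorem specNorm_smul {n : ℕ} (c : ℝ) (A : Matrix (Fin n) (Fin n) ℝ) :
    specNorm (c • A) = |c| * specNorm A := by
  rw [specNorm, specNorm, map_smul, map_smul, norm_smul, Real.norm_eq_abs]

theorem specNorm_smul_vecMulVec_self {n : ℕ} (c : ℝ) {u : Fin n → ℝ} (hu : u ⬝ᵥ u = 1) :
    specNorm (c • vecMulVec u u) = |c| := by
  rw [specNorm_smul, specNorm_vecMulVec, hu, Real.sqrt_one, mul_one, mul_one]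

theorem stmt_5_general (n : ℕ) (hn : 2 ≤ n) (ε : ℝ) (hε : ε ∈ Set.Ioo (0 : ℝ) 1)
    (k : ℕ) (hk2 : k ≤ n - 1)
    (z₁ : Fin n → ℝ)
    (ψ : (i : ℕ) → (Fin (i + 1) → (Fin n → ℝ)) → (Fin n → ℝ))
    (y : Matrix (Fin n) (Fin n) ℝ → ℕ → (Fin n → ℝ))
    (hy0 : ∀ A, y A 0 = A.mulVec z₁)
    (hysucc : ∀ A i, y A (i + 1) = A.mulVec (ψ i (fun j : Fin (i + 1) => y A j.1)))
    (φ : (Fin k → (Fin n → ℝ)) → ℝ) :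
    ∃ A : Matrix (Fin n) (Fin n) ℝ, A ≠ 0 ∧ A.IsSymm ∧
      ε * specNorm A < |lamMax A - φ (fun i => y A i.1)| := by
  obtain ⟨-, hε1⟩ := hε
  obtain ⟨u, hu, horth⟩ := exists_dotProduct_self_eq_one_forall_dotProduct_eq_zero
    (fun i : Fin k => zeroAnswerQueries z₁ ψ i) (by simp only [Fintype.card_fin]; omega)
  set r := φ 0
  set c := (|r| + 1) / (1 - ε)
  have hc : 0 < c := div_pos (by positivity) (by linarith)
  set A := c • vecMulVec u u
  have hanswers : ∀ i < k, y A i = 0 :=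
    answers_eq_zero_of_map_zeroAnswerQueries (hy0 A) (hysucc A) fun i hi => by
      rw [smul_vecMulVec_self_mulVec, dotProduct_comm, horth ⟨i, hi⟩, mul_zero, zero_smul]
  have hφ : φ (fun i => y A i.1) = r := congr_arg φ (funext fun i => hanswers i i.2)
  have hspec : specNorm A = c := by rw [specNorm_smul_vecMulVec_self c hu, abs_of_pos hc]
  refine ⟨A, fun hA => hc.ne' ?_, IsSymm.smul (transpose_vecMulVec u u) c, ?_⟩
  · rw [← hspec, hA, specNorm, map_zero, map_zero, norm_zero]
  rw [hφ, lamMax_smul_vecMulVec_self hu hc.le, hspec]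
  have hgap : c * (1 - ε) = |r| + 1 := div_mul_cancel₀ _ (by linarith)
  calc ε * c < c - r := by linarith [le_abs_self r]
    _ ≤ |c - r| := le_abs_self _

/-- **The largest eigenvalue cannot be approximated with fewer than `n`
matrix-vector multiplications.**  Adaptive information of cardinality `k ≤ n - 1`
is given by a starting vector `z₁` and maps `ψᵢ` choosing each subsequent vector
from the previously computed products; the products `y A i` satisfy the stated
recurrence.  For any algorithm `φ` there is a nonzero symmetric `A` with
`|λ_max(A) − φ(y₁(A), …, y_k(A))| > ε ‖A‖`. -/
theorem stmt_5 (n : ℕ) (hn : 2 ≤ n) (ε : ℝ) (hε : ε ∈ Set.Ioo (0 : ℝ) 1)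
    (k : ℕ) (hk1 : 1 ≤ k) (hk2 : k ≤ n - 1)
    (z₁ : Fin n → ℝ)
    (ψ : (i : ℕ) → (Fin (i + 1) → (Fin n → ℝ)) → (Fin n → ℝ))
    (y : Matrix (Fin n) (Fin n) ℝ → ℕ → (Fin n → ℝ))
    (hy0 : ∀ A, y A 0 = A.mulVec z₁)
    (hysucc : ∀ A i, y A (i + 1) = A.mulVec (ψ i (fun j : Fin (i + 1) => y A j.1)))
    (φ : (Fin k → (Fin n → ℝ)) → ℝ) :
    ∃ A : Matrix (Fin n) (Fin n) ℝ, A ≠ 0 ∧ A.IsSymm ∧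
      ε * specNorm A < |lamMax A - φ (fun i => y A i.1)| :=
  stmt_5_general n hn ε hε k hk2 z₁ ψ y hy0 hysucc φ
end

section
/- Let n ≥ 2, let b ∈ ℝ^n be a nonzero vector, let ε ∈ (0,1), let k ≥ 1, and let φ : (ℝ^n)^k → ℝ be arbitrary. Then there exists a nonzero n×n real symmetric matrix A with A b = b (hence A^i b = b for all i ≥ 1, so the Krylov information [Ab, A²b, …, A^k b] equals [b, b, …, b]) such that |λ_max(A) − φ(b, b, …, b)| > ε ‖A‖. In other words, for any fixed starting vector b there are symmetric matrices for which Krylov information, of arbitrary cardinality, does not suffice to approximate the largest eigenvalue to within ε‖A‖. -/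
/-! The matrix `t • 1 + (1 - t) • P`, with `P` the orthogonal projection onto `ℝ ∙ b`, fixes `b`
and acts as multiplication by `t` on `bᗮ`. For `t ≥ 1` its largest eigenvalue and its spectral norm
are both `t`, while its Krylov information is `[b, …, b]` whatever `t` is; so `φ (b, …, b)` misses
`t` by more than `ε t` as soon as `(1 - ε) t > |φ (b, …, b)|`. -/

open Matrix WithLp

theorem Matrix.pow_mulVec_eq_self_of_mulVec_eq_self {R ι : Type*} [CommSemiring R] [Fintype ι]
    [DecidableEq ι] {A : Matrix ι ι R} {b : ι → R} (h : A *ᵥ b = b) (i : ℕ) :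
    (A ^ i) *ᵥ b = b := by
  induction i with
  | zero => simp
  | succ i ih => rw [pow_succ, ← mulVec_mulVec, h, ih]

theorem EuclideanSpace.norm_toLp_sq {ι : Type*} [Fintype ι] (v : ι → ℝ) :
    ‖(toLp 2 v : EuclideanSpace ℝ ι)‖ ^ 2 = v ⬝ᵥ v := by
  rw [← real_inner_self_eq_norm_sq, EuclideanSpace.inner_toLp_toLp, star_trivial]

section

variable {n : ℕ} {A : Matrix (Fin n) (Fin n) ℝ}

theorem lamMax_eq_of_forall_eigenvalue_le {μ : ℝ} {w : Fin n → ℝ} (hw : w ≠ 0)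
    (hAw : A *ᵥ w = μ • w)
    (hle : ∀ ν v, v ≠ 0 → A *ᵥ v = ν • v → ν ≤ μ) : lamMax A = μ :=
  IsGreatest.csSup_eq ⟨⟨w, hw, hAw⟩, fun ν ⟨v, hv, hAv⟩ => hle ν v hv hAv⟩

theorem specNorm_le_of_mulVec_dotProduct_le {C : ℝ} (hC : 0 ≤ C)
    (h : ∀ v, A *ᵥ v ⬝ᵥ A *ᵥ v ≤ C ^ 2 * (v ⬝ᵥ v)) : specNorm A ≤ C := by
  refine ContinuousLinearMap.opNorm_le_bound _ hC fun x => ?_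
  rw [← pow_le_pow_iff_left₀ (norm_nonneg _) (by positivity) two_ne_zero, mul_pow,
    ← toLp_ofLp 2 x, LinearMap.coe_toContinuousLinearMap', toLpLin_apply, ofLp_toLp,
    EuclideanSpace.norm_toLp_sq, EuclideanSpace.norm_toLp_sq]
  exact h _

theorem abs_le_specNorm_of_mulVec_eq_smul {μ : ℝ} {w : Fin n → ℝ} (hw : w ≠ 0)
    (hAw : A *ᵥ w = μ • w) : |μ| ≤ specNorm A := by
  have hle := (LinearMap.toContinuousLinearMap (toEuclideanLin A)).le_opNorm (toLp 2 w)
  rw [LinearMap.coe_toContinuousLinearMap', toLpLin_apply, ofLp_toLp, hAw, toLp_smul,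
    norm_smul, Real.norm_eq_abs] at hle
  exact le_of_mul_le_mul_right hle (norm_pos_iff.mpr (by simpa using hw))

end

namespace Matrix

section Field

variable {K ι : Type*} [Field K] [Fintype ι] [DecidableEq ι]

-- When `b ⬝ᵥ b = 0` the division gives `0`, and this is `t • 1`.
def scaleOrthogonal (b : ι → K) (t : K) : Matrix ι ι K :=
  t • 1 + ((1 - t) / (b ⬝ᵥ b)) • vecMulVec b b

variable {b v : ι → K} {t : K}

theorem scaleOrthogonal_mulVec :
    scaleOrthogonal b t *ᵥ v = t • v + ((1 - t) / (b ⬝ᵥ b) * (b ⬝ᵥ v)) • b := by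
  simp [scaleOrthogonal, add_mulVec, smul_mulVec, vecMulVec_mulVec, smul_smul]

theorem isSymm_scaleOrthogonal : (scaleOrthogonal b t).IsSymm := by
  simp [scaleOrthogonal, IsSymm, transpose_add, transpose_smul, transpose_vecMulVec]

theorem scaleOrthogonal_mulVec_self (hb : b ⬝ᵥ b ≠ 0) : scaleOrthogonal b t *ᵥ b = b := by
  rw [scaleOrthogonal_mulVec, div_mul_cancel₀ _ hb, ← add_smul, add_sub_cancel, one_smul]

theorem scaleOrthogonal_mulVec_of_dotProduct_eq_zero (h : b ⬝ᵥ v = 0) :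
    scaleOrthogonal b t *ᵥ v = t • v := by
  simp [scaleOrthogonal_mulVec, h]

theorem dotProduct_scaleOrthogonal_mulVec (hb : b ⬝ᵥ b ≠ 0) :
    b ⬝ᵥ scaleOrthogonal b t *ᵥ v = b ⬝ᵥ v := by
  rw [dotProduct_mulVec, ← mulVec_transpose, isSymm_scaleOrthogonal.eq,
    scaleOrthogonal_mulVec_self hb]

theorem eq_one_or_eq_of_scaleOrthogonal_mulVec_eq_smul (hb : b ⬝ᵥ b ≠ 0) (hv : v ≠ 0) {μ : K}
    (h : scaleOrthogonal b t *ᵥ v = μ • v) : μ = 1 ∨ μ = t := by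
  refine or_iff_not_imp_left.mpr fun hμ => smul_left_injective K hv ?_
  have hbv : b ⬝ᵥ v = μ * (b ⬝ᵥ v) := by
    rw [← smul_eq_mul, ← dotProduct_smul, ← h, dotProduct_scaleOrthogonal_mulVec hb]
  have hbv0 : b ⬝ᵥ v = 0 := by
    simpa [sub_eq_zero, Ne.symm hμ] using (show (1 - μ) * (b ⬝ᵥ v) = 0 by linear_combination hbv)
  simp only [← h, scaleOrthogonal_mulVec_of_dotProduct_eq_zero hbv0]

end Field

theorem scaleOrthogonal_mulVec_dotProduct_self_le {ι : Type*} [Fintype ι] [DecidableEq ι]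
    (b v : ι → ℝ) {t : ℝ} (ht : 1 ≤ t) :
    scaleOrthogonal b t *ᵥ v ⬝ᵥ scaleOrthogonal b t *ᵥ v ≤ t ^ 2 * (v ⬝ᵥ v) := by
  obtain hb | hb := (dotProduct_self_star_nonneg b).eq_or_lt <;> rw [star_trivial] at hb
  · simp [scaleOrthogonal_mulVec, ← hb, sq, mul_assoc]
  · have key : 0 ≤ (t ^ 2 - 1) * (b ⬝ᵥ v) ^ 2 := by
      have : 0 ≤ t ^ 2 - 1 := by nlinarith
      positivity
    rw [scaleOrthogonal_mulVec]
    simp only [add_dotProduct, dotProduct_add, smul_dotProduct, dotProduct_smul, smul_eq_mul,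
      dotProduct_comm v b]
    field_simp
    linarith

variable {n : ℕ} [Nontrivial (Fin n)] {b : Fin n → ℝ} {t : ℝ}

theorem lamMax_scaleOrthogonal (hb : b ≠ 0) (ht : 1 ≤ t) : lamMax (scaleOrthogonal b t) = t := by
  have hbb : b ⬝ᵥ b ≠ 0 := fun h => hb (dotProduct_self_eq_zero.mp h)
  obtain ⟨w, hw, hbw⟩ := exists_ne_zero_dotProduct_eq_zero b
  refine lamMax_eq_of_forall_eigenvalue_le hw
    (scaleOrthogonal_mulVec_of_dotProduct_eq_zero (by rwa [dotProduct_comm])) fun ν v hv h => ?_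
  rcases eq_one_or_eq_of_scaleOrthogonal_mulVec_eq_smul hbb hv h with rfl | rfl
  exacts [ht, le_rfl]

theorem specNorm_scaleOrthogonal (ht : 1 ≤ t) : specNorm (scaleOrthogonal b t) = t := by
  obtain ⟨w, hw, hbw⟩ := exists_ne_zero_dotProduct_eq_zero b
  refine le_antisymm (specNorm_le_of_mulVec_dotProduct_le (by linarith)
    (scaleOrthogonal_mulVec_dotProduct_self_le b · ht)) ?_
  simpa [abs_of_nonneg (by linarith : 0 ≤ t)] using abs_le_specNorm_of_mulVec_eq_smul hw
    (scaleOrthogonal_mulVec_of_dotProduct_eq_zero (t := t) (by rwa [dotProduct_comm]))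

end Matrix

theorem exists_one_le_mul_lt_abs_sub {ε : ℝ} (hε : ε < 1) (c : ℝ) :
    ∃ t : ℝ, 1 ≤ t ∧ ε * t < |t - c| := by
  refine ⟨max 1 ((|c| + 1) / (1 - ε)), le_max_left _ _, ?_⟩
  have h : |c| + 1 ≤ (1 - ε) * max 1 ((|c| + 1) / (1 - ε)) :=
    (div_le_iff₀' (sub_pos.mpr hε)).mp (le_max_right _ _)
  calc ε * _ < _ - c := by linarith [le_abs_self c]
    _ ≤ _ := le_abs_self _

theorem stmt_6_general (n : ℕ) (hn : 2 ≤ n) (b : Fin n → ℝ) (hb : b ≠ 0)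
    (ε : ℝ) (hε : ε ∈ Set.Ioo (0 : ℝ) 1) (k : ℕ)
    (φ : (Fin k → (Fin n → ℝ)) → ℝ) :
    ∃ A : Matrix (Fin n) (Fin n) ℝ, A ≠ 0 ∧ A.IsSymm ∧ A.mulVec b = b ∧
      (∀ i : ℕ, 1 ≤ i → (A ^ i).mulVec b = b) ∧
      ε * specNorm A < |lamMax A - φ (fun _ => b)| := by
  have : Nontrivial (Fin n) := Fin.nontrivial_iff_two_le.mpr hn
  obtain ⟨t, ht, hεt⟩ := exists_one_le_mul_lt_abs_sub hε.2 (φ fun _ => b)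
  have hAb : scaleOrthogonal b t *ᵥ b = b :=
    scaleOrthogonal_mulVec_self fun h => hb (dotProduct_self_eq_zero.mp h)
  refine ⟨scaleOrthogonal b t, fun h => hb ?_, isSymm_scaleOrthogonal, hAb,
    fun i _ => pow_mulVec_eq_self_of_mulVec_eq_self hAb i, ?_⟩
  · rwa [h, zero_mulVec, eq_comm] at hAb
  · rwa [lamMax_scaleOrthogonal hb ht, specNorm_scaleOrthogonal ht]

/-- **For any fixed starting vector, Krylov information of arbitrary cardinality does
not suffice to approximate the largest eigenvalue.**  Given `b ≠ 0`, `ε ∈ (0,1)`,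
`k ≥ 1` and any algorithm `φ`, there is a nonzero symmetric `A` with `A b = b`
(hence `Aⁱ b = b` for all `i ≥ 1`, so the Krylov information `[Ab, …, A^k b]` equals
`[b, …, b]`) such that `|λ_max(A) − φ(b, …, b)| > ε ‖A‖`. -/
theorem stmt_6 (n : ℕ) (hn : 2 ≤ n) (b : Fin n → ℝ) (hb : b ≠ 0)
    (ε : ℝ) (hε : ε ∈ Set.Ioo (0 : ℝ) 1) (k : ℕ) (hk : 1 ≤ k)
    (φ : (Fin k → (Fin n → ℝ)) → ℝ) :
    ∃ A : Matrix (Fin n) (Fin n) ℝ, A ≠ 0 ∧ A.IsSymm ∧ A.mulVec b = b ∧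
      (∀ i : ℕ, 1 ≤ i → (A ^ i).mulVec b = b) ∧
      ε * specNorm A < |lamMax A - φ (fun _ => b)| :=
  stmt_6_general n hn b hb ε hε k φ
end

section
/- Let A be an n×n real symmetric positive definite matrix, let b ∈ ℝ^n, let k ≥ 1, and let K = span{b, Ab, …, A^{k−1}b} be the k-th Krylov subspace of (A, b). Let x ∈ ℝ^n with x ∉ K. Then for every C > 0 there exists an n×n real symmetric positive definite matrix A′ with A′^i b = A^i b for all i = 1, …, k (so A′ has identical Krylov information of cardinality k as A) and ‖A′ x − b‖ > C. That is, for any approximation lying outside the Krylov subspace there is a symmetric positive definite matrix with the same Krylov information whose residual at that approximation is arbitrarily large. -/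
open Matrix

noncomputable def krylovSubspace {R ι : Type*} [CommSemiring R] [Fintype ι] [DecidableEq ι]
    (A : Matrix ι ι R) (b : ι → R) (k : ℕ) : Submodule R (ι → R) :=
  Submodule.span R (Set.range fun i : Fin k => (A ^ (i : ℕ)) *ᵥ b)

section Krylov

variable {R ι : Type*} [CommSemiring R] [Fintype ι] [DecidableEq ι]

theorem pow_mulVec_mem_krylovSubspace (A : Matrix ι ι R) (b : ι → R) {i k : ℕ} (hi : i < k) :
    (A ^ i) *ᵥ b ∈ krylovSubspace A b k :=
  Submodule.subset_span ⟨⟨i, hi⟩, rfl⟩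

theorem pow_mulVec_eq_of_eqOn_krylovSubspace {A B : Matrix ι ι R} {b : ι → R} {k : ℕ}
    (hBA : ∀ v ∈ krylovSubspace A b k, B *ᵥ v = A *ᵥ v) :
    ∀ i ≤ k, (B ^ i) *ᵥ b = (A ^ i) *ᵥ b
  | 0, _ => by simp
  | i + 1, hi => by
    rw [pow_succ', pow_succ', ← mulVec_mulVec, ← mulVec_mulVec,
      pow_mulVec_eq_of_eqOn_krylovSubspace hBA i (by omega),
      hBA _ (pow_mulVec_mem_krylovSubspace A b hi)]

end Krylov

theorem exists_dotProduct_eq_one_of_notMem {K ι : Type*} [Field K] [Fintype ι] [DecidableEq ι]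
    {p : Submodule K (ι → K)} {x : ι → K} (hx : x ∉ p) :
    ∃ w : ι → K, w ⬝ᵥ x = 1 ∧ ∀ v ∈ p, w ⬝ᵥ v = 0 := by
  obtain ⟨f, hfx, hpf⟩ := p.exists_le_ker_of_notMem hx
  have hf (v : ι → K) : (dotProductEquiv K ι).symm f ⬝ᵥ v = f v :=
    LinearMap.congr_fun ((dotProductEquiv K ι).apply_symm_apply f) v
  refine ⟨(f x)⁻¹ • (dotProductEquiv K ι).symm f, ?_, fun v hv => ?_⟩
  · rw [smul_dotProduct, hf, smul_eq_mul, inv_mul_cancel₀ hfx]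
  · rw [smul_dotProduct, hf, LinearMap.mem_ker.mp (hpf hv), smul_zero]

theorem add_smul_vecMulVec_mulVec {R ι : Type*} [CommSemiring R] [Fintype ι]
    (A : Matrix ι ι R) (t : R) (w v : ι → R) :
    (A + t • vecMulVec w w) *ᵥ v = A *ᵥ v + (t * (w ⬝ᵥ v)) • w := by
  rw [add_mulVec, smul_mulVec, vecMulVec_mulVec, op_smul_eq_smul, smul_smul]

theorem Matrix.PosDef.add_smul_vecMulVec_self {ι : Type*} [Fintype ι] {A : Matrix ι ι ℝ}
    (hA : A.PosDef) (w : ι → ℝ) {t : ℝ} (ht : 0 ≤ t) : (A + t • vecMulVec w w).PosDef :=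
  hA.add_posSemidef ((posSemidef_vecMulVec_self_star w).smul ht)

theorem abs_le_euclNorm {n : ℕ} (v : Fin n → ℝ) (j : Fin n) : |v j| ≤ euclNorm v :=
  Real.abs_le_sqrt (Finset.single_le_sum (f := fun i => v i ^ 2) (fun i _ => sq_nonneg (v i))
    (Finset.mem_univ j))

theorem exists_lt_euclNorm_add_smul {n : ℕ} (r : Fin n → ℝ) {w : Fin n → ℝ} (hw : w ≠ 0)
    (C : ℝ) : ∃ t : ℝ, 0 ≤ t ∧ C < euclNorm (r + t • w) := by
  obtain ⟨j, hj⟩ := Function.ne_iff.mp hw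
  have hwj : 0 < |w j| := abs_pos.mpr hj
  set t := (|C| + |r j| + 1) / |w j|
  have ht : 0 ≤ t := by positivity
  have htw : t * |w j| = |C| + |r j| + 1 := div_mul_cancel₀ _ hwj.ne'
  refine ⟨t, ht, ?_⟩
  calc C < |t * w j| - |r j| := by rw [abs_mul, abs_of_nonneg ht]; linarith [le_abs_self C]
    _ ≤ |r j + t * w j| := by linarith [abs_add' (t * w j) (r j)]
    _ ≤ euclNorm (r + t • w) := abs_le_euclNorm (r + t • w) j

theorem stmt_7_general (n k : ℕ)
    (A : Matrix (Fin n) (Fin n) ℝ) (hA : A.PosDef) (b x : Fin n → ℝ)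
    (hx : x ∉ Submodule.span ℝ (Set.range fun i : Fin k => (A ^ (i : ℕ)).mulVec b)) :
    ∀ C > (0 : ℝ), ∃ A' : Matrix (Fin n) (Fin n) ℝ, A'.PosDef ∧
      (∀ i : ℕ, 1 ≤ i → i ≤ k → (A' ^ i).mulVec b = (A ^ i).mulVec b) ∧
      C < euclNorm (A'.mulVec x - b) := by
  intro C _
  obtain ⟨w, hwx, hwK⟩ := exists_dotProduct_eq_one_of_notMem (p := krylovSubspace A b k) hx
  have hw : w ≠ 0 := by rintro rfl; simp at hwx
  obtain ⟨t, ht, hC⟩ := exists_lt_euclNorm_add_smul (A *ᵥ x - b) hw C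
  refine ⟨A + t • vecMulVec w w, hA.add_smul_vecMulVec_self w ht, fun i _ hi => ?_, ?_⟩
  · refine pow_mulVec_eq_of_eqOn_krylovSubspace (fun v hv => ?_) i hi
    rw [add_smul_vecMulVec_mulVec, hwK v hv, mul_zero, zero_smul, add_zero]
  · rwa [add_smul_vecMulVec_mulVec, hwx, mul_one, add_sub_right_comm]

/-- **Outside the Krylov subspace the residual can be arbitrarily large.**
Let `A` be symmetric positive definite, `K = span{b, Ab, …, A^{k-1}b}`, and let
`x ∉ K`.  Then for every `C > 0` there is a symmetric positive definite `A′` with the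
same Krylov information of cardinality `k` as `A` (i.e. `A′ⁱ b = Aⁱ b` for
`i = 1, …, k`) and `‖A′ x − b‖ > C`. -/
theorem stmt_7 (n k : ℕ) (hk : 1 ≤ k)
    (A : Matrix (Fin n) (Fin n) ℝ) (hA : A.PosDef) (b x : Fin n → ℝ)
    (hx : x ∉ Submodule.span ℝ (Set.range fun i : Fin k => (A ^ (i : ℕ)).mulVec b)) :
    ∀ C > (0 : ℝ), ∃ A' : Matrix (Fin n) (Fin n) ℝ, A'.PosDef ∧
      (∀ i : ℕ, 1 ≤ i → i ≤ k → (A' ^ i).mulVec b = (A ^ i).mulVec b) ∧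
      C < euclNorm (A'.mulVec x - b) :=
  stmt_7_general n k A hA b x hx
end

section
/- Let n ≥ 2, let b ∈ ℝ^n with ‖b‖ = 1, let ε ∈ (0,1), and let 1 ≤ k ≤ n−1. Then for every algorithm φ : (ℝ^n)^k → ℝ^n using Krylov information there exists an n×n real symmetric positive definite matrix A such that ‖A φ(Ab, A²b, …, A^k b) − b‖ > ε. That is, on the class of all n×n symmetric positive definite matrices, n matrix-vector multiplications are needed to compute an ε-approximation to the linear system A x = b with residual at most ε: the class SPD is too large for fewer than n Krylov steps to suffice. -/
open Matrix

lemma euclNorm_sq {n : ℕ} (v : Fin n → ℝ) : euclNorm v ^ 2 = v ⬝ᵥ v := by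
  rw [euclNorm, Real.sq_sqrt (Finset.sum_nonneg fun _ _ => sq_nonneg _)]
  simp [dotProduct, sq]

lemma lt_euclNorm_of_sq_mul_lt {n : ℕ} {ε : ℝ} {u w : Fin n → ℝ}
    (h : ε ^ 2 * (u ⬝ᵥ u) < (u ⬝ᵥ w) ^ 2) : ε < euclNorm w := by
  have hcs : (u ⬝ᵥ w) ^ 2 ≤ (u ⬝ᵥ u) * euclNorm w ^ 2 := by
    rw [euclNorm_sq]
    simpa [dotProduct, sq] using Finset.sum_mul_sq_le_sq_mul_sq Finset.univ u w
  have hu : 0 < u ⬝ᵥ u := by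
    refine lt_of_le_of_ne (Finset.sum_nonneg fun _ _ => mul_self_nonneg _) fun hu => ?_
    rw [← hu] at h hcs
    linarith
  refine lt_of_pow_lt_pow_left₀ 2 (Real.sqrt_nonneg _) (lt_of_mul_lt_mul_left ?_ hu.le)
  linarith

lemma pow_add_smul_vecMulVec_mulVec {R ι : Type*} [CommRing R] [Fintype ι] [DecidableEq ι]
    {A : Matrix ι ι R} {b v : ι → R} {k : ℕ} (hv : ∀ j < k, v ⬝ᵥ (A ^ j *ᵥ b) = 0)
    (t : R) :
    ∀ j ≤ k, (A + t • vecMulVec v v) ^ j *ᵥ b = A ^ j *ᵥ b := by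
  intro j hj
  induction j with
  | zero => rfl
  | succ j ih =>
    rw [pow_succ', ← mulVec_mulVec, ih (by omega), add_mulVec, smul_mulVec, vecMulVec_mulVec,
      hv j (by omega), pow_succ', ← mulVec_mulVec]
    simp

lemma exists_nonneg_lt_sq_add_mul (c d : ℝ) {a : ℝ} (ha : a ≠ 0) :
    ∃ t : ℝ, 0 ≤ t ∧ c < (d + t * a) ^ 2 := by
  refine ⟨(|c| + |d| + 1) / |a|, by positivity, ?_⟩
  set s := (|c| + |d| + 1) / |a| * a
  have hs : |s| = |c| + |d| + 1 := by
    rw [abs_mul, abs_div, abs_abs, div_mul_cancel₀ _ (abs_ne_zero.2 ha)]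
    exact abs_of_pos (by positivity)
  have hds : |c| + 1 ≤ |d + s| := by
    have := abs_sub_abs_le_abs_sub s (-d)
    rw [abs_neg, sub_neg_eq_add, add_comm s d, hs] at this
    linarith
  nlinarith [le_abs_self c, abs_nonneg c, sq_abs (d + s)]

lemma mul_geom_sum_lt_one {c r : ℝ} (hc : 0 ≤ c) (hr : 0 ≤ r) (hcr : c < 1 - r) (N : ℕ) :
    c * ∑ i ∈ Finset.range N, r ^ i < 1 := by
  have hsum := geom_sum_Ico_le_of_lt_one (m := 0) (n := N) hr (by linarith)
  rw [← Finset.range_eq_Ico, pow_zero] at hsum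
  calc c * ∑ i ∈ Finset.range N, r ^ i ≤ c * (1 / (1 - r)) := by gcongr
    _ < 1 := by rw [mul_one_div, div_lt_one (by linarith)]; exact hcr

lemma dotProduct_mulVec_mulVec_of_mem_orthogonalGroup {n : ℕ} {U : Matrix (Fin n) (Fin n) ℝ}
    (hU : U ∈ orthogonalGroup (Fin n) ℝ) (x y : Fin n → ℝ) :
    (U *ᵥ x) ⬝ᵥ (U *ᵥ y) = x ⬝ᵥ y := by
  rw [dotProduct_comm, dotProduct_mulVec, ← mulVec_transpose, mulVec_mulVec,
    ← conjTranspose_eq_transpose_of_trivial, ← star_eq_conjTranspose,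
    (mem_unitaryGroup_iff').1 hU, one_mulVec, dotProduct_comm]

structure KrylovCertificate {n : ℕ} (k : ℕ) (ε : ℝ) (b : Fin n → ℝ)
    (A : Matrix (Fin n) (Fin n) ℝ) (u v : Fin n → ℝ) : Prop where
  posDef : A.PosDef
  mulVec_eq : A *ᵥ u = v
  orthogonal_krylov : ∀ j < k, v ⬝ᵥ (A ^ j *ᵥ b) = 0
  dotProduct_eq_one : u ⬝ᵥ b = 1
  sq_mul_lt_one : ε ^ 2 * (u ⬝ᵥ u) < 1

namespace KrylovCertificate

variable {n k : ℕ} {ε : ℝ} {b u v : Fin n → ℝ} {A : Matrix (Fin n) (Fin n) ℝ}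

lemma dotProduct_mulVec_eq (h : KrylovCertificate k ε b A u v) (x : Fin n → ℝ) :
    u ⬝ᵥ (A *ᵥ x) = v ⬝ᵥ x := by
  rw [dotProduct_mulVec, ← mulVec_transpose, ← conjTranspose_eq_transpose_of_trivial,
    h.posDef.isHermitian.eq, h.mulVec_eq]

theorem exists_posDef_residual_gt (h : KrylovCertificate k ε b A u v)
    (φ : (Fin k → Fin n → ℝ) → Fin n → ℝ) :
    ∃ A' : Matrix (Fin n) (Fin n) ℝ, A'.PosDef ∧
      ε < euclNorm (A' *ᵥ φ (fun i => A' ^ ((i : ℕ) + 1) *ᵥ b) - b) := by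
  set x := φ (fun i => A ^ ((i : ℕ) + 1) *ᵥ b)
  by_cases hx : v ⬝ᵥ x = 0
  · refine ⟨A, h.posDef, lt_euclNorm_of_sq_mul_lt (u := u) ?_⟩
    rw [dotProduct_sub, h.dotProduct_mulVec_eq, hx, h.dotProduct_eq_one]
    linarith [h.sq_mul_lt_one]
  have hvv : v ⬝ᵥ v ≠ 0 := by
    intro h0
    exact hx (by rw [dotProduct_self_eq_zero.1 h0, zero_dotProduct])
  obtain ⟨t, ht, hlt⟩ :=
    exists_nonneg_lt_sq_add_mul (ε ^ 2 * (v ⬝ᵥ v)) (v ⬝ᵥ (A *ᵥ x - b)) (mul_ne_zero hx hvv)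
  refine ⟨A + t • vecMulVec v v,
    h.posDef.add_posSemidef ((posSemidef_vecMulVec_self_star v).smul ht), ?_⟩
  have hinfo : (fun i : Fin k => (A + t • vecMulVec v v) ^ ((i : ℕ) + 1) *ᵥ b) =
      fun i : Fin k => A ^ ((i : ℕ) + 1) *ᵥ b :=
    funext fun i => pow_add_smul_vecMulVec_mulVec h.orthogonal_krylov t _ i.isLt
  rw [hinfo]
  have hres : v ⬝ᵥ ((A + t • vecMulVec v v) *ᵥ x - b) =
      v ⬝ᵥ (A *ᵥ x - b) + t * ((v ⬝ᵥ x) * (v ⬝ᵥ v)) := by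
    rw [add_mulVec, smul_mulVec, vecMulVec_mulVec, add_sub_right_comm, dotProduct_add,
      dotProduct_smul, dotProduct_smul]
    simp only [MulOpposite.smul_eq_mul_unop, MulOpposite.unop_op, smul_eq_mul]
    ring
  exact lt_euclNorm_of_sq_mul_lt (u := v) (hres ▸ hlt)

lemma conj {U : Matrix (Fin n) (Fin n) ℝ} (h : KrylovCertificate k ε b A u v)
    (hU : U ∈ orthogonalGroup (Fin n) ℝ) :
    KrylovCertificate k ε (U *ᵥ b) (U * A * star U) (U *ᵥ u) (U *ᵥ v) where
  posDef :=
    (IsUnit.posDef_star_right_conjugate_iff (Unitary.isUnit_coe (U := ⟨U, hU⟩))).2 h.posDef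
  mulVec_eq := by
    rw [mulVec_mulVec, mul_assoc, mul_assoc, (mem_unitaryGroup_iff').1 hU, mul_one,
      ← mulVec_mulVec, h.mulVec_eq]
  orthogonal_krylov j hj := by
    have hpow : (U * A * star U) ^ j = U * A ^ j * star U :=
      (map_pow (Unitary.conjStarAlgAut ℝ _ ⟨U, hU⟩) A j).symm
    rw [hpow, mulVec_mulVec, mul_assoc, mul_assoc, (mem_unitaryGroup_iff').1 hU, mul_one,
      ← mulVec_mulVec, dotProduct_mulVec_mulVec_of_mem_orthogonalGroup hU,
      h.orthogonal_krylov j hj]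
  dotProduct_eq_one := by
    rw [dotProduct_mulVec_mulVec_of_mem_orthogonalGroup hU, h.dotProduct_eq_one]
  sq_mul_lt_one := by
    rw [dotProduct_mulVec_mulVec_of_mem_orthogonalGroup hU]
    exact h.sq_mul_lt_one

end KrylovCertificate

lemma pow_mulVec_apply_eq_zero_of_hessenberg {R : Type*} [Semiring R] {n : ℕ}
    {M : Matrix (Fin n) (Fin n) R} (hM : ∀ i j : Fin n, (j : ℕ) + 1 < i → M i j = 0)
    {y : Fin n → R} {p : ℕ} (hy : ∀ l : Fin n, p < l → y l = 0) (j : ℕ) :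
    ∀ i : Fin n, p + j < i → (M ^ j *ᵥ y) i = 0 := by
  induction j with
  | zero => simpa using hy
  | succ j ih =>
    intro i hi
    rw [pow_succ', ← mulVec_mulVec, mulVec, dotProduct]
    refine Finset.sum_eq_zero fun l _ => ?_
    by_cases hl : p + j < l
    · rw [ih l hl, mul_zero]
    · rw [hM i l (by omega), zero_mul]

section Bidiagonal

variable {m : ℕ}

def bidiag (δ : ℝ) : Matrix (Fin (m + 1)) (Fin (m + 1)) ℝ :=
  of fun i j => if j = i then δ else if (j : ℕ) = i + 1 then -1 else 0

def geomVec (δ : ℝ) : Fin (m + 1) → ℝ := fun i => δ ^ (i : ℕ)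

lemma bidiag_apply_eq_zero_of_lt (δ : ℝ) {i j : Fin (m + 1)} (h : j < i) :
    bidiag δ i j = 0 := by
  have hne : (j : ℕ) ≠ i + 1 := by have := Fin.lt_def.1 h; omega
  simp [bidiag, h.ne, hne]

lemma bidiag_apply_eq_zero_of_succ_lt (δ : ℝ) {i j : Fin (m + 1)} (h : (i : ℕ) + 1 < j) :
    bidiag δ i j = 0 := by
  have hne : j ≠ i := fun e => by rw [e] at h; omega
  have hne' : (j : ℕ) ≠ i + 1 := by omega
  simp [bidiag, hne, hne']

lemma bidiag_isUpperTriangular (δ : ℝ) :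
    (bidiag δ : Matrix (Fin (m + 1)) _ ℝ).IsUpperTriangular :=
  fun _ _ h => bidiag_apply_eq_zero_of_lt δ h

lemma bidiag_mulVec_geomVec (δ : ℝ) :
    bidiag δ *ᵥ geomVec δ = Pi.single (Fin.last m) (δ ^ (m + 1)) := by
  ext i
  rw [mulVec, dotProduct]
  by_cases hi : i = Fin.last m
  · subst hi
    rw [Finset.sum_eq_single (Fin.last m)]
    · simp [bidiag, geomVec, pow_succ']
    · intro j _ hj
      rw [bidiag_apply_eq_zero_of_lt δ (Fin.lt_last_iff_ne_last.2 hj), zero_mul]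
    · simp
  · have hlt : (i : ℕ) + 1 < m + 1 := by
      have := Fin.val_lt_last hi
      omega
    have hne : i ≠ ⟨i + 1, hlt⟩ := fun h => by simpa using congrArg Fin.val h
    rw [Finset.sum_eq_add i ⟨i + 1, hlt⟩ hne]
    · simp [bidiag, geomVec, hi, hne.symm, pow_succ']
    · intro j _ hj
      rcases lt_or_gt_of_ne hj.1 with h | h
      · rw [bidiag_apply_eq_zero_of_lt δ h, zero_mul]
      · have : (i : ℕ) + 1 < j := by
          have := Fin.lt_def.1 h
          have : (j : ℕ) ≠ i + 1 := fun e => hj.2 (Fin.ext e)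
          omega
        rw [bidiag_apply_eq_zero_of_succ_lt δ this, zero_mul]
    · simp
    · simp

lemma bidiag_transpose_mulVec_single_last (δ c : ℝ) :
    (bidiag δ)ᵀ *ᵥ Pi.single (Fin.last m) c = Pi.single (Fin.last m) (δ * c) := by
  ext i
  rw [mulVec_single]
  by_cases hi : i = Fin.last m
  · simp [bidiag, hi]
  · simp [bidiag, hi, i.isLt.ne]

lemma posDef_transpose_mul_bidiag {δ : ℝ} (hδ : δ ≠ 0) :
    ((bidiag δ : Matrix (Fin (m + 1)) _ ℝ)ᵀ * bidiag δ).PosDef := by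
  rw [← conjTranspose_eq_transpose_of_trivial]
  refine PosDef.conjTranspose_mul_self _ (mulVec_injective_iff_isUnit.2 ?_)
  rw [isUnit_iff_isUnit_det, det_of_isUpperTriangular (bidiag_isUpperTriangular δ)]
  simp [bidiag, hδ]

lemma transpose_mul_bidiag_apply_eq_zero (δ : ℝ) {i j : Fin (m + 1)} (hij : (j : ℕ) + 1 < i) :
    ((bidiag δ)ᵀ * bidiag δ : Matrix (Fin (m + 1)) _ ℝ) i j = 0 := by
  rw [mul_apply]
  refine Finset.sum_eq_zero fun l _ => ?_
  rw [transpose_apply]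
  by_cases hl : (l : ℕ) + 1 < i
  · rw [bidiag_apply_eq_zero_of_succ_lt δ hl, zero_mul]
  · rw [bidiag_apply_eq_zero_of_lt δ (show j < l from Fin.lt_def.2 (by omega)), mul_zero]

end Bidiagonal

theorem krylovCertificate_bidiag {m k : ℕ} (hk : k ≤ m) {ε δ : ℝ} (hδ : 0 < δ)
    (hεδ : ε ^ 2 < 1 - δ ^ 2) :
    KrylovCertificate k ε (Pi.single 0 1) ((bidiag δ)ᵀ * bidiag δ) (geomVec δ)
      (Pi.single (Fin.last m) (δ ^ (m + 2))) where
  posDef := posDef_transpose_mul_bidiag hδ.ne'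
  mulVec_eq := by
    rw [← mulVec_mulVec, bidiag_mulVec_geomVec, bidiag_transpose_mulVec_single_last,
      ← pow_succ']
  orthogonal_krylov j hj := by
    have he₀ : ∀ l : Fin (m + 1), 0 < (l : ℕ) → (Pi.single 0 1 : Fin (m + 1) → ℝ) l = 0 :=
      fun l hl => Pi.single_eq_of_ne (Fin.pos_iff_ne_zero.1 hl) _
    rw [single_dotProduct, pow_mulVec_apply_eq_zero_of_hessenberg
      (fun _ _ => transpose_mul_bidiag_apply_eq_zero δ) he₀ j _
      (by rw [zero_add, Fin.val_last]; omega), mul_zero]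
  dotProduct_eq_one := by simp [geomVec]
  sq_mul_lt_one := by
    have := mul_geom_sum_lt_one (sq_nonneg ε) (sq_nonneg δ) hεδ (m + 1)
    rw [← Fin.sum_univ_eq_sum_range] at this
    simpa [dotProduct, geomVec, ← pow_add, ← two_mul, ← pow_mul] using this

lemma exists_mem_orthogonalGroup_mulVec_single_zero {n : ℕ} [NeZero n] {b : Fin n → ℝ}
    (hb : euclNorm b = 1) :
    ∃ U ∈ orthogonalGroup (Fin n) ℝ, U *ᵥ Pi.single 0 1 = b := by
  have hbE : ‖(WithLp.toLp 2 b : EuclideanSpace ℝ (Fin n))‖ = 1 := by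
    rw [EuclideanSpace.norm_eq]
    simpa [euclNorm, Real.norm_eq_abs, sq_abs] using hb
  have hon : Orthonormal ℝ (({0} : Set (Fin n)).domRestrict fun _ => WithLp.toLp 2 b) :=
    ⟨fun _ => hbE, fun i j hij => absurd (Subtype.ext (i.2.trans j.2.symm)) hij⟩
  obtain ⟨Q, hQ⟩ := hon.exists_orthonormalBasis_extension_of_card_eq (by simp)
  refine ⟨(EuclideanSpace.basisFun (Fin n) ℝ).toBasis.toMatrix Q,
    (EuclideanSpace.basisFun _ _).toMatrix_orthonormalBasis_mem_unitary Q, ?_⟩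
  ext i
  rw [mulVec_single_one, col_apply, Module.Basis.toMatrix_apply,
    OrthonormalBasis.coe_toBasis_repr_apply, EuclideanSpace.basisFun_repr, hQ 0 rfl]

theorem stmt_8_general (n : ℕ) (b : Fin n → ℝ) (hb : euclNorm b = 1)
    (ε : ℝ) (hε : ε ∈ Set.Ioo (0 : ℝ) 1) (k : ℕ) (hk2 : k ≤ n - 1)
    (φ : (Fin k → (Fin n → ℝ)) → (Fin n → ℝ)) :
    ∃ A : Matrix (Fin n) (Fin n) ℝ, A.PosDef ∧
      ε < euclNorm (A.mulVec (φ (fun i => (A ^ ((i : ℕ) + 1)).mulVec b)) - b) := by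
  obtain ⟨m, rfl⟩ : ∃ m, n = m + 1 :=
    Nat.exists_eq_succ_of_ne_zero fun h => by subst h; simp [euclNorm] at hb
  obtain ⟨U, hU, rfl⟩ := exists_mem_orthogonalGroup_mulVec_single_zero hb
  obtain ⟨hε0, hε1⟩ := hε
  have hcert := krylovCertificate_bidiag (k := k) (by omega) (sub_pos.2 hε1)
    (by nlinarith : ε ^ 2 < 1 - (1 - ε) ^ 2)
  exact (hcert.conj hU).exists_posDef_residual_gt φ

/-- **The class SPD is too large: `n` matrix-vector multiplications are needed for
linear systems.**  Let `‖b‖ = 1`, `ε ∈ (0,1)` and `1 ≤ k ≤ n − 1`.  For every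
algorithm `φ` using Krylov information `[Ab, A²b, …, A^k b]` there is a symmetric
positive definite `A` whose computed approximation has residual larger than `ε`. -/
theorem stmt_8 (n : ℕ) (hn : 2 ≤ n) (b : Fin n → ℝ) (hb : euclNorm b = 1)
    (ε : ℝ) (hε : ε ∈ Set.Ioo (0 : ℝ) 1) (k : ℕ) (hk1 : 1 ≤ k) (hk2 : k ≤ n - 1)
    (φ : (Fin k → (Fin n → ℝ)) → (Fin n → ℝ)) :
    ∃ A : Matrix (Fin n) (Fin n) ℝ, A.PosDef ∧
      ε < euclNorm (A.mulVec (φ (fun i => (A ^ ((i : ℕ) + 1)).mulVec b)) - b) :=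
  stmt_8_general n b hb ε hε k hk2 φ
end

section
/- Let F be an orthogonally invariant class of nonsingular n×n real matrices, let ε > 0, and let k ≥ 0. Suppose there exists an algorithm φ : ℝ^n × (ℝ^n)^k → ℝ^n using Krylov information of cardinality k such that ‖A φ(b, Ab, …, A^k b) − b‖ ≤ ε for every A ∈ F and every b ∈ ℝ^n with ‖b‖ = 1. Then the minimal residual algorithm with one more step achieves error ε: for every A ∈ F and every b with ‖b‖ = 1, min over x ∈ span{b, Ab, …, A^k b} of ‖Ax − b‖ ≤ ε. That is, for any orthogonally invariant class F, the minimal residual algorithm requires at most one more Krylov step than the best algorithm using Krylov information: m^Kr(ε) ≤ m^Kr(ε, φ^mr) ≤ m^Kr(ε) + 1. -/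
/-!
Let `x` be the output of `φ` on `(A, b)` and let `R` be the orthogonal reflection in the
Krylov subspace `K = span {b, Ab, …, A^k b}`. Since `R` fixes `K` pointwise, `Rᵀ A R ∈ F` has
the same Krylov information as `A`, so `φ` returns the same `x` for it; as `R` is orthogonal
and fixes `b`, this says `‖A (R x) - b‖ ≤ ε`. The residual is convex, so the midpoint
`(x + R x) / 2`, which is the orthogonal projection of `x` onto `K`, also has residual at
most `ε`.
-/

open Matrix

namespace Matrix

variable {ι : Type*} [Fintype ι] [DecidableEq ι]

theorem transpose_mul_self_eq_one_iff_mem_unitary {Q : Matrix ι ι ℝ} :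
    Qᵀ * Q = 1 ↔ Q ∈ unitary (Matrix ι ι ℝ) := by
  have := (mem_unitaryGroup_iff' (A := Q)).symm
  rwa [star_eq_conjTranspose, conjTranspose_eq_transpose_of_trivial] at this

theorem conj_pow_of_transpose_mul_self {Q : Matrix ι ι ℝ} (hQ : Qᵀ * Q = 1) (A : Matrix ι ι ℝ)
    (m : ℕ) :
    (Qᵀ * A * Q) ^ m = Qᵀ * A ^ m * Q :=
  Units.conj_pow ⟨Qᵀ, Q, hQ, mul_eq_one_comm.mp hQ⟩ A m

theorem conj_pow_mulVec_of_mulVec_eq {Q A : Matrix ι ι ℝ} {b : ι → ℝ} {m : ℕ}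
    (hQ : Qᵀ * Q = 1) (hb : Q *ᵥ b = b) (hAb : Q *ᵥ (A ^ m *ᵥ b) = A ^ m *ᵥ b) :
    (Qᵀ * A * Q) ^ m *ᵥ b = A ^ m *ᵥ b := by
  rw [conj_pow_of_transpose_mul_self hQ, ← mulVec_mulVec, ← mulVec_mulVec, hb]
  nth_rw 1 [← hAb]
  rw [mulVec_mulVec, hQ, one_mulVec]

noncomputable def reflectionMatrix (V : Submodule ℝ (ι → ℝ)) : Matrix ι ι ℝ :=
  (toEuclideanCLM (n := ι) (𝕜 := ℝ)).symm
    ((V.comap (WithLp.linearEquiv 2 ℝ (ι → ℝ)).toLinearMap).reflection :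
      EuclideanSpace ℝ ι →L[ℝ] EuclideanSpace ℝ ι)

variable (V : Submodule ℝ (ι → ℝ))

theorem reflectionMatrix_mulVec (v : ι → ℝ) :
    reflectionMatrix V *ᵥ v =
      WithLp.ofLp
        ((V.comap (WithLp.linearEquiv 2 ℝ (ι → ℝ)).toLinearMap).reflection (WithLp.toLp 2 v)) := by
  rw [reflectionMatrix, ← ofLp_toEuclideanCLM, StarAlgEquiv.apply_symm_apply]
  rfl

theorem transpose_reflectionMatrix_mul_self : (reflectionMatrix V)ᵀ * reflectionMatrix V = 1 :=
  transpose_mul_self_eq_one_iff_mem_unitary.mpr <|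
    Unitary.map_mem (toEuclideanCLM (n := ι) (𝕜 := ℝ)).symm.toStarAlgHom
      (Unitary.linearIsometryEquiv.symm _).prop

theorem reflectionMatrix_mulVec_of_mem {v : ι → ℝ} (hv : v ∈ V) :
    reflectionMatrix V *ᵥ v = v := by
  rw [reflectionMatrix_mulVec, Submodule.reflection_mem_subspace_eq_self hv]

theorem smul_add_reflectionMatrix_mulVec_mem (v : ι → ℝ) :
    (2⁻¹ : ℝ) • (v + reflectionMatrix V *ᵥ v) ∈ V := by
  set K := V.comap (WithLp.linearEquiv 2 ℝ (ι → ℝ)).toLinearMap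
  have h : (2⁻¹ : ℝ) • (WithLp.toLp 2 v + K.reflection (WithLp.toLp 2 v)) =
      K.starProjection (WithLp.toLp 2 v) := by
    rw [Submodule.reflection_apply, add_sub_cancel]
    module
  have hmem := K.starProjection_apply_mem (WithLp.toLp 2 v)
  rw [← h, Submodule.mem_comap] at hmem
  simpa [reflectionMatrix_mulVec] using hmem

end Matrix

theorem euclNorm_eq_norm_toLp {n : ℕ} (v : Fin n → ℝ) : euclNorm v = ‖WithLp.toLp 2 v‖ := by
  simp [euclNorm, EuclideanSpace.norm_eq]

theorem euclNorm_mulVec_of_transpose_mul_self {n : ℕ} {Q : Matrix (Fin n) (Fin n) ℝ}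
    (hQ : Qᵀ * Q = 1) (v : Fin n → ℝ) : euclNorm (Q *ᵥ v) = euclNorm v := by
  rw [euclNorm_eq_norm_toLp, euclNorm_eq_norm_toLp, ← toEuclideanCLM_toLp]
  exact ContinuousLinearMap.norm_map_of_mem_unitary
    (Unitary.map_mem _ (transpose_mul_self_eq_one_iff_mem_unitary.mp hQ)) _

theorem euclNorm_conj_mulVec_sub {n : ℕ} {Q : Matrix (Fin n) (Fin n) ℝ}
    {b : Fin n → ℝ} (hQ : Qᵀ * Q = 1) (hb : Q *ᵥ b = b) (A : Matrix (Fin n) (Fin n) ℝ)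
    (x : Fin n → ℝ) :
    euclNorm ((Qᵀ * A * Q) *ᵥ x - b) = euclNorm (A *ᵥ (Q *ᵥ x) - b) := by
  have hQt : Qᵀᵀ * Qᵀ = 1 := by rw [transpose_transpose, mul_eq_one_comm.mp hQ]
  have hbt : Qᵀ *ᵥ b = b := by rw [← hb, mulVec_mulVec, hQ, one_mulVec, hb]
  rw [← euclNorm_mulVec_of_transpose_mul_self hQt (A *ᵥ (Q *ᵥ x) - b), mulVec_sub, hbt,
    mulVec_mulVec, mulVec_mulVec, Matrix.mul_assoc]

theorem euclNorm_mulVec_midpoint_sub_le {n : ℕ} (A : Matrix (Fin n) (Fin n) ℝ)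
    {b x y : Fin n → ℝ} {ε : ℝ} (hx : euclNorm (A *ᵥ x - b) ≤ ε) (hy : euclNorm (A *ᵥ y - b) ≤ ε) :
    euclNorm (A *ᵥ ((2⁻¹ : ℝ) • (x + y)) - b) ≤ ε := by
  have h : A *ᵥ ((2⁻¹ : ℝ) • (x + y)) - b =
      (2⁻¹ : ℝ) • ((A *ᵥ x - b) + (A *ᵥ y - b)) := by
    rw [mulVec_smul, mulVec_add]; module
  rw [euclNorm_eq_norm_toLp] at hx hy ⊢
  rw [h, WithLp.toLp_smul, WithLp.toLp_add, norm_smul, norm_inv, Real.norm_two]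
  have := norm_add_le (WithLp.toLp 2 (A *ᵥ x - b)) (WithLp.toLp 2 (A *ᵥ y - b))
  linarith

theorem stmt_9_general (n k : ℕ) (F : Set (Matrix (Fin n) (Fin n) ℝ))
    (hFoi : ∀ A ∈ F, ∀ Q : Matrix (Fin n) (Fin n) ℝ, Qᵀ * Q = 1 → Qᵀ * A * Q ∈ F)
    (ε : ℝ)
    (φ : (Fin n → ℝ) × (Fin k → (Fin n → ℝ)) → (Fin n → ℝ))
    (hφ : ∀ A ∈ F, ∀ b : Fin n → ℝ, euclNorm b = 1 →
      euclNorm (A.mulVec (φ (b, fun i => (A ^ ((i : ℕ) + 1)).mulVec b)) - b) ≤ ε) :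
    ∀ A ∈ F, ∀ b : Fin n → ℝ, euclNorm b = 1 →
      ∃ x ∈ Submodule.span ℝ (Set.range fun i : Fin (k + 1) => (A ^ (i : ℕ)).mulVec b),
        euclNorm (A.mulVec x - b) ≤ ε := by
  intro A hA b hb
  set K := Submodule.span ℝ (Set.range fun i : Fin (k + 1) => A ^ (i : ℕ) *ᵥ b)
  set R := reflectionMatrix K
  have hR : Rᵀ * R = 1 := transpose_reflectionMatrix_mul_self K
  have hfix (m : ℕ) (hm : m ≤ k) : R *ᵥ (A ^ m *ᵥ b) = A ^ m *ᵥ b :=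
    reflectionMatrix_mulVec_of_mem K (Submodule.subset_span ⟨⟨m, Nat.lt_succ_of_le hm⟩, rfl⟩)
  have hRb : R *ᵥ b = b := by simpa using hfix 0 (Nat.zero_le k)
  have hinfo : (fun i : Fin k => (Rᵀ * A * R) ^ ((i : ℕ) + 1) *ᵥ b) =
      fun i : Fin k => A ^ ((i : ℕ) + 1) *ᵥ b :=
    funext fun i => conj_pow_mulVec_of_mulVec_eq hR hRb (hfix _ i.isLt)
  have hx := hφ A hA b hb
  have hRx := hφ _ (hFoi A hA R hR) b hb
  rw [hinfo, euclNorm_conj_mulVec_sub hR hRb] at hRx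
  exact ⟨_, smul_add_reflectionMatrix_mulVec_mem K _,
    euclNorm_mulVec_midpoint_sub_le A hx hRx⟩

/-- **The minimal residual algorithm loses at most one Krylov step.**
Let `F` be an orthogonally invariant class of nonsingular `n × n` matrices.  If some
algorithm `φ` using Krylov information `[b, Ab, …, A^k b]` achieves residual at most
`ε` for every `A ∈ F` and every unit vector `b`, then for every such `A, b` there is
a vector in the Krylov subspace `span{b, Ab, …, A^k b}` (one more power, i.e. one more
step of the mr algorithm) whose residual is at most `ε`. -/
theorem stmt_9 (n k : ℕ) (F : Set (Matrix (Fin n) (Fin n) ℝ))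
    (hFns : ∀ A ∈ F, IsUnit A)
    (hFoi : ∀ A ∈ F, ∀ Q : Matrix (Fin n) (Fin n) ℝ, Qᵀ * Q = 1 → Qᵀ * A * Q ∈ F)
    (ε : ℝ) (hε : 0 < ε)
    (φ : (Fin n → ℝ) × (Fin k → (Fin n → ℝ)) → (Fin n → ℝ))
    (hφ : ∀ A ∈ F, ∀ b : Fin n → ℝ, euclNorm b = 1 →
      euclNorm (A.mulVec (φ (b, fun i => (A ^ ((i : ℕ) + 1)).mulVec b)) - b) ≤ ε) :
    ∀ A ∈ F, ∀ b : Fin n → ℝ, euclNorm b = 1 →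
      ∃ x ∈ Submodule.span ℝ (Set.range fun i : Fin (k + 1) => (A ^ (i : ℕ)).mulVec b),
        euclNorm (A.mulVec x - b) ≤ ε :=
  stmt_9_general n k F hFoi ε φ hφ
end

section
/- Let F be an orthogonally invariant class of nonsingular n×n real matrices and let ε > 0. Suppose there exists adaptive information of cardinality k using matrix-vector multiplications (where z_1 may depend on b and each z_{i+1} may depend on b and the previously computed products A z_1, …, A z_i) together with an algorithm φ such that ‖A φ(b, A z_1, …, A z_k) − b‖ ≤ ε for every A ∈ F and every b ∈ ℝ^n with ‖b‖ = 1. Then there exists an algorithm φ′ using Krylov information of cardinality 2k + 2 such that ‖A φ′(b, Ab, A²b, …, A^{2k+2} b) − b‖ ≤ ε for every A ∈ F and every b with ‖b‖ = 1. That is, for any orthogonally invariant class, Krylov information is optimal among all matrix-vector multiplication information to within a multiplicative factor of 2: m(ε) ≤ m^Kr(ε) ≤ 2 m(ε) + 2. -/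
/-!
Conjugating `A` by an orthogonal matrix that fixes `b` keeps it in `F` and transports Krylov
subspaces and residuals. If `b, A b, …, A^(2k+1) b` are dependent, their span is `A`-invariant and
contains `A⁻¹ b`. Otherwise we change `A` query by query: before the `i`-th query, all earlier
queries and products lie in `K = span {b, …, B^(2i) b}`, and a reflection fixing `K` turns the new
direction of `B^(2i+1) b` onto the component of the query orthogonal to `K`. This leaves the
earlier information unchanged and puts the query into the next Krylov subspace, hence its product
into the one after. One more reflection puts the output `x` of `φ` into
`span {b, …, B^(2k+1) b}`; as `B ∈ F`, `‖B x - b‖ ≤ ε`, and conjugating back gives a Krylov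
vector for `A` with the same residual.
-/

open Matrix

namespace Krylov

variable {n : ℕ}

lemma euclNorm_mulVec_of_transpose_mul_self {Q : Matrix (Fin n) (Fin n) ℝ} (hQ : Qᵀ * Q = 1)
    (v : Fin n → ℝ) : euclNorm (Q *ᵥ v) = euclNorm v := by
  have hdot : ∀ w : Fin n → ℝ, ∑ i, w i ^ 2 = w ⬝ᵥ w := fun w => by simp [dotProduct, sq]
  rw [euclNorm, euclNorm, hdot, hdot, dotProduct_mulVec, vecMul_mulVec, hQ, vecMul_one]

lemma transpose_mulVec_eq_of_mulVec_eq {Q : Matrix (Fin n) (Fin n) ℝ} (hQ : Qᵀ * Q = 1)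
    {v : Fin n → ℝ} (h : Q *ᵥ v = v) : Qᵀ *ᵥ v = v := by
  conv_lhs => rw [← h]
  rw [mulVec_mulVec, hQ, one_mulVec]

/-- The reflection in the hyperplane orthogonal to `d` (the identity when `d = 0`). -/
noncomputable def householder (d : Fin n → ℝ) : Matrix (Fin n) (Fin n) ℝ :=
  1 - (2 / (d ⬝ᵥ d)) • vecMulVec d d

lemma householder_mulVec (d v : Fin n → ℝ) :
    householder d *ᵥ v = v - (2 / (d ⬝ᵥ d) * (d ⬝ᵥ v)) • d := by
  rw [householder, sub_mulVec, one_mulVec, smul_mulVec, vecMulVec_mulVec, op_smul_eq_smul,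
    smul_smul]

lemma householder_transpose (d : Fin n → ℝ) : (householder d)ᵀ = householder d := by
  rw [householder, transpose_sub, transpose_one, transpose_smul, transpose_vecMulVec]

lemma householder_mulVec_of_dotProduct_eq_zero {d v : Fin n → ℝ} (h : d ⬝ᵥ v = 0) :
    householder d *ᵥ v = v := by
  rw [householder_mulVec, h, mul_zero, zero_smul, sub_zero]

lemma householder_mul_self (d : Fin n → ℝ) : householder d * householder d = 1 := by
  rcases eq_or_ne d 0 with rfl | hd
  · simp [householder]
  have hdd : d ⬝ᵥ d ≠ 0 := dotProduct_self_eq_zero.not.mpr hd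
  refine ext_iff_mulVec.mpr fun v => ?_
  rw [← mulVec_mulVec, one_mulVec, householder_mulVec d (householder d *ᵥ v),
    householder_mulVec]
  simp only [dotProduct_sub, dotProduct_smul, smul_eq_mul]
  field_simp
  module

lemma transpose_householder_mul_self (d : Fin n → ℝ) :
    (householder d)ᵀ * householder d = 1 := by
  rw [householder_transpose, householder_mul_self]

lemma householder_sub_mulVec {w f : Fin n → ℝ} (hwf : f ⬝ᵥ f = w ⬝ᵥ w) :
    householder (w - f) *ᵥ w = f := by
  rcases eq_or_ne w f with rfl | hne
  · simp [householder]
  have hdd : (w - f) ⬝ᵥ (w - f) = 2 * ((w - f) ⬝ᵥ w) := by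
    simp only [sub_dotProduct, dotProduct_sub, dotProduct_comm f w, hwf]
    ring
  have hdw : (w - f) ⬝ᵥ w ≠ 0 := fun h => by
    rw [h, mul_zero, dotProduct_self_eq_zero, sub_eq_zero] at hdd
    exact hne hdd
  have hscale : 2 / (2 * ((w - f) ⬝ᵥ w)) * ((w - f) ⬝ᵥ w) = 1 := by field_simp
  rw [householder_mulVec, hdd, hscale, one_smul, sub_sub_cancel]

lemma dotProduct_self_nonneg (v : Fin n → ℝ) : 0 ≤ v ⬝ᵥ v :=
  Finset.sum_nonneg fun i _ => mul_self_nonneg (v i)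

lemma exists_orthogonal_fixing_perp {w f : Fin n → ℝ} (hf : f ≠ 0) :
    ∃ Q : Matrix (Fin n) (Fin n) ℝ, Qᵀ * Q = 1 ∧
      (∀ v, w ⬝ᵥ v = 0 → f ⬝ᵥ v = 0 → Q *ᵥ v = v) ∧ ∃ s : ℝ, w = s • (Qᵀ *ᵥ f) := by
  set s := √(w ⬝ᵥ w) / √(f ⬝ᵥ f)
  have hff : f ⬝ᵥ f ≠ 0 := dotProduct_self_eq_zero.not.mpr hf
  have hnorm : (s • f) ⬝ᵥ (s • f) = w ⬝ᵥ w := by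
    rw [smul_dotProduct, dotProduct_smul, smul_eq_mul, smul_eq_mul, ← mul_assoc, ← sq, div_pow,
      Real.sq_sqrt (dotProduct_self_nonneg w), Real.sq_sqrt (dotProduct_self_nonneg f),
      div_mul_cancel₀ _ hff]
  refine ⟨householder (w - s • f), transpose_householder_mul_self _,
    fun v hwv hfv => householder_mulVec_of_dotProduct_eq_zero ?_, s, ?_⟩
  · rw [sub_dotProduct, smul_dotProduct, hwv, hfv, smul_zero, sub_zero]
  · calc w = (householder (w - s • f) * householder (w - s • f)) *ᵥ w := by
          rw [householder_mul_self, one_mulVec]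
      _ = s • ((householder (w - s • f))ᵀ *ᵥ f) := by
          rw [← mulVec_mulVec, householder_sub_mulVec hnorm, householder_transpose, mulVec_smul]

lemma exists_mem_forall_dotProduct_sub_eq_zero (E : Submodule ℝ (Fin n → ℝ)) (x : Fin n → ℝ) :
    ∃ u ∈ E, ∀ e ∈ E, e ⬝ᵥ (x - u) = 0 := by
  let L := (WithLp.linearEquiv 2 ℝ (Fin n → ℝ)).symm
  obtain ⟨_, ⟨u, hu, rfl⟩, z, hz, hxz⟩ := (E.map L.toLinearMap).exists_add_mem_mem_orthogonal (L x)
  refine ⟨u, hu, fun e he => ?_⟩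
  have hx : x - u = L.symm z := by
    rw [← L.symm_apply_apply x, hxz, map_add, LinearEquiv.coe_coe, L.symm_apply_apply,
      add_sub_cancel_left]
  rw [hx, dotProduct_comm]
  exact (E.map L.toLinearMap).inner_right_of_mem_orthogonal ⟨e, he, rfl⟩ hz

/-- The Krylov subspace `span {b, B b, …, B^(m-1) b}`. -/
def krylov (B : Matrix (Fin n) (Fin n) ℝ) (b : Fin n → ℝ) (m : ℕ) : Submodule ℝ (Fin n → ℝ) :=
  Submodule.span ℝ ((fun j => (B ^ j) *ᵥ b) '' Set.Iio m)

section KrylovSubspace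

variable (B : Matrix (Fin n) (Fin n) ℝ) (b : Fin n → ℝ)

lemma pow_mulVec_mem_krylov {j m : ℕ} (h : j < m) : (B ^ j) *ᵥ b ∈ krylov B b m :=
  Submodule.subset_span ⟨j, h, rfl⟩

lemma mem_krylov_self {m : ℕ} (hm : 0 < m) : b ∈ krylov B b m := by
  simpa using pow_mulVec_mem_krylov B b hm

lemma krylov_mono {m m' : ℕ} (h : m ≤ m') : krylov B b m ≤ krylov B b m' :=
  Submodule.span_mono (Set.image_mono fun _ hj => lt_of_lt_of_le hj h)

lemma mem_krylov_iff {m : ℕ} {x : Fin n → ℝ} :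
    x ∈ krylov B b m ↔ ∃ c : Fin m → ℝ, ∑ j, c j • (B ^ (j : ℕ)) *ᵥ b = x := by
  have hrange : Set.range (fun j : Fin m => (B ^ (j : ℕ)) *ᵥ b)
      = (fun j => (B ^ j) *ᵥ b) '' Set.Iio m := by
    ext v
    exact ⟨fun ⟨j, hj⟩ => ⟨j, j.isLt, hj⟩, fun ⟨j, hj, hv⟩ => ⟨⟨j, hj⟩, hv⟩⟩
  rw [krylov, ← hrange]
  exact Submodule.mem_span_range_iff_exists_fun ℝ

lemma mulVec_mem_krylov_succ {m : ℕ} {x : Fin n → ℝ} (hx : x ∈ krylov B b m) :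
    B *ᵥ x ∈ krylov B b (m + 1) := by
  have hmap : (krylov B b m).map B.mulVecLin ≤ krylov B b (m + 1) := by
    rw [krylov, Submodule.map_span, Submodule.span_le, ← Set.image_comp]
    rintro _ ⟨j, hj, rfl⟩
    rw [Function.comp_apply, mulVecLin_apply, mulVec_mulVec, ← pow_succ']
    exact pow_mulVec_mem_krylov B b (Nat.succ_lt_succ hj)
  exact hmap (Submodule.mem_map_of_mem hx)

variable {B b}

lemma krylov_succ_le {m : ℕ} (h : (B ^ m) *ᵥ b ∈ krylov B b m) :
    krylov B b (m + 1) ≤ krylov B b m := by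
  refine Submodule.span_le.mpr ?_
  rintro _ ⟨j, hj, rfl⟩
  rcases Nat.lt_succ_iff_lt_or_eq.mp hj with hj | rfl
  exacts [pow_mulVec_mem_krylov B b hj, h]

lemma pow_mulVec_mem_krylov_of_le {m M : ℕ} (h : (B ^ m) *ᵥ b ∈ krylov B b m) (hM : m ≤ M) :
    (B ^ M) *ᵥ b ∈ krylov B b m := by
  induction M, hM using Nat.le_induction with
  | base => exact h
  | succ M _ ih =>
    rw [pow_succ', ← mulVec_mulVec]
    exact krylov_succ_le h (mulVec_mem_krylov_succ B b ih)

lemma pow_mulVec_not_mem_krylov_of_le {m M : ℕ} (h : (B ^ M) *ᵥ b ∉ krylov B b M) (hM : m ≤ M) :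
    (B ^ m) *ᵥ b ∉ krylov B b m :=
  fun hm => h (krylov_mono B b hM (pow_mulVec_mem_krylov_of_le hm hM))

lemma exists_mem_krylov_mulVec_eq (hB : IsUnit B) {m : ℕ} (hm : 0 < m)
    (h : (B ^ m) *ᵥ b ∈ krylov B b m) : ∃ x ∈ krylov B b m, B *ᵥ x = b := by
  let L : krylov B b m →ₗ[ℝ] krylov B b m :=
    B.mulVecLin.restrict fun x hx => krylov_succ_le h (mulVec_mem_krylov_succ B b hx)
  have hL : Function.Injective L := fun x x' hxx' =>
    Subtype.ext (mulVec_injective_iff_isUnit.mpr hB (congrArg Subtype.val hxx'))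
  obtain ⟨x, hx⟩ := LinearMap.injective_iff_surjective.mp hL ⟨b, mem_krylov_self B b hm⟩
  exact ⟨x, x.2, congrArg Subtype.val hx⟩

end KrylovSubspace

section Conjugation

variable {P B : Matrix (Fin n) (Fin n) ℝ} {b : Fin n → ℝ}

lemma conj_pow_mulVec (hP : Pᵀ * P = 1) (hb : P *ᵥ b = b) (j : ℕ) :
    ((Pᵀ * B * P) ^ j) *ᵥ b = Pᵀ *ᵥ ((B ^ j) *ᵥ b) := by
  have hconj : (Pᵀ * B * P) ^ j = Pᵀ * B ^ j * P :=
    Units.conj_pow' ⟨P, Pᵀ, mul_eq_one_comm.mp hP, hP⟩ B j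
  rw [hconj, ← mulVec_mulVec, hb, mulVec_mulVec]

lemma krylov_conj (hP : Pᵀ * P = 1) (hb : P *ᵥ b = b) (m : ℕ) :
    krylov (Pᵀ * B * P) b m = (krylov B b m).map (Pᵀ).mulVecLin := by
  rw [krylov, krylov, Submodule.map_span, ← Set.image_comp]
  congr 2
  funext j
  exact conj_pow_mulVec hP hb j

lemma krylov_conj_of_fix (hP : Pᵀ * P = 1) {m : ℕ} (hm : 0 < m)
    (hfix : ∀ e ∈ krylov B b m, P *ᵥ e = e) : krylov (Pᵀ * B * P) b m = krylov B b m := by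
  rw [krylov, krylov]
  congr 1
  refine Set.image_congr fun j hj => ?_
  rw [conj_pow_mulVec hP (hfix b (mem_krylov_self B b hm)),
    transpose_mulVec_eq_of_mulVec_eq hP (hfix _ (pow_mulVec_mem_krylov B b hj))]

end Conjugation

def OrthConjFixing (b : Fin n → ℝ) (A B : Matrix (Fin n) (Fin n) ℝ) : Prop :=
  ∃ P : Matrix (Fin n) (Fin n) ℝ, Pᵀ * P = 1 ∧ P *ᵥ b = b ∧ B = Pᵀ * A * P

namespace OrthConjFixing

variable {A B C : Matrix (Fin n) (Fin n) ℝ} {b : Fin n → ℝ}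

lemma trans (hAB : OrthConjFixing b A B) (hBC : OrthConjFixing b B C) : OrthConjFixing b A C := by
  obtain ⟨P, hP, hPb, rfl⟩ := hAB
  obtain ⟨Q, hQ, hQb, rfl⟩ := hBC
  refine ⟨P * Q, ?_, by rw [← mulVec_mulVec, hQb, hPb],
    by simp only [transpose_mul, Matrix.mul_assoc]⟩
  rw [transpose_mul, Matrix.mul_assoc, ← Matrix.mul_assoc Pᵀ, hP, Matrix.one_mul, hQ]

lemma mem {F : Set (Matrix (Fin n) (Fin n) ℝ)}
    (hF : ∀ A ∈ F, ∀ Q : Matrix (Fin n) (Fin n) ℝ, Qᵀ * Q = 1 → Qᵀ * A * Q ∈ F)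
    (h : OrthConjFixing b A B) (hA : A ∈ F) : B ∈ F := by
  obtain ⟨P, hP, -, rfl⟩ := h
  exact hF A hA P hP

lemma pow_mulVec_not_mem_krylov (h : OrthConjFixing b A B) {m : ℕ}
    (hA : (A ^ m) *ᵥ b ∉ krylov A b m) : (B ^ m) *ᵥ b ∉ krylov B b m := by
  obtain ⟨P, hP, hb, rfl⟩ := h
  rw [krylov_conj hP hb, conj_pow_mulVec hP hb]
  rintro ⟨v, hv, hPv⟩
  have hv' : v = (A ^ m) *ᵥ b := by
    have hPPv := congrArg (P *ᵥ ·) hPv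
    simpa only [mulVecLin_apply, mulVec_mulVec, ← Matrix.mul_assoc, mul_eq_one_comm.mp hP,
      Matrix.one_mul, one_mulVec] using hPPv
  exact hA (hv' ▸ hv)

lemma exists_residual_le (h : OrthConjFixing b A B) {m : ℕ} {ε : ℝ} {x : Fin n → ℝ}
    (hx : x ∈ krylov B b m) (hres : euclNorm (B *ᵥ x - b) ≤ ε) :
    ∃ x' ∈ krylov A b m, euclNorm (A *ᵥ x' - b) ≤ ε := by
  obtain ⟨P, hP, hb, rfl⟩ := h
  have hP' : P * Pᵀ = 1 := mul_eq_one_comm.mp hP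
  refine ⟨P *ᵥ x, ?_, ?_⟩
  · obtain ⟨v, hv, rfl⟩ : x ∈ (krylov A b m).map Pᵀ.mulVecLin := krylov_conj hP hb m ▸ hx
    rwa [mulVecLin_apply, mulVec_mulVec, hP', one_mulVec]
  · have hPres : A *ᵥ (P *ᵥ x) - b = P *ᵥ ((Pᵀ * A * P) *ᵥ x - b) := by
      rw [mulVec_sub, hb, mulVec_mulVec, mulVec_mulVec, ← Matrix.mul_assoc, ← Matrix.mul_assoc,
        hP', Matrix.one_mul]
    rwa [hPres, euclNorm_mulVec_of_transpose_mul_self hP]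

end OrthConjFixing

lemma exists_conj_mem_krylov_succ {B : Matrix (Fin n) (Fin n) ℝ} {b : Fin n → ℝ} {m : ℕ}
    (hm : 0 < m) (hB : (B ^ m) *ᵥ b ∉ krylov B b m) (z : Fin n → ℝ) :
    ∃ Q : Matrix (Fin n) (Fin n) ℝ, Qᵀ * Q = 1 ∧ (∀ e ∈ krylov B b m, Q *ᵥ e = e) ∧
      z ∈ krylov (Qᵀ * B * Q) b (m + 1) := by
  -- Split `z = u + w` and `B ^ m *ᵥ b = p + f` orthogonally to `krylov B b m`; a reflection
  -- fixing `krylov B b m` sends `f` onto the line of `w`.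
  obtain ⟨u, hu, hzu⟩ := exists_mem_forall_dotProduct_sub_eq_zero (krylov B b m) z
  obtain ⟨p, hp, hfp⟩ := exists_mem_forall_dotProduct_sub_eq_zero (krylov B b m) ((B ^ m) *ᵥ b)
  have hf : (B ^ m) *ᵥ b - p ≠ 0 := fun h => hB (sub_eq_zero.mp h ▸ hp)
  obtain ⟨Q, hQ, hfix, s, hs⟩ := exists_orthogonal_fixing_perp (w := z - u) hf
  have hE : ∀ e ∈ krylov B b m, Q *ᵥ e = e := fun e he =>
    hfix e (dotProduct_comm e _ ▸ hzu e he) (dotProduct_comm e _ ▸ hfp e he)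
  refine ⟨Q, hQ, hE, ?_⟩
  have hK : krylov B b m ≤ krylov (Qᵀ * B * Q) b (m + 1) :=
    (krylov_conj_of_fix hQ hm hE).ge.trans (krylov_mono _ _ m.le_succ)
  have hnext : Qᵀ *ᵥ ((B ^ m) *ᵥ b - p) = ((Qᵀ * B * Q) ^ m) *ᵥ b - p := by
    rw [mulVec_sub, transpose_mulVec_eq_of_mulVec_eq hQ (hE p hp),
      conj_pow_mulVec hQ (hE b (mem_krylov_self B b hm))]
  rw [← add_sub_cancel u z, hs, hnext]
  exact add_mem (hK hu) (Submodule.smul_mem _ s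
    (sub_mem (pow_mulVec_mem_krylov _ _ m.lt_succ_self) (hK hp)))

section AdaptiveInformation

variable {ζ : (i : ℕ) → (Fin n → ℝ) → (Fin i → (Fin n → ℝ)) → (Fin n → ℝ)}
  {y : Matrix (Fin n) (Fin n) ℝ → (Fin n → ℝ) → ℕ → (Fin n → ℝ)}

variable (ζ y) in
def query (B : Matrix (Fin n) (Fin n) ℝ) (b : Fin n → ℝ) (j : ℕ) : Fin n → ℝ :=
  ζ j b fun l : Fin j => y B b l

lemma query_congr {B B' : Matrix (Fin n) (Fin n) ℝ} {b : Fin n → ℝ} {j : ℕ}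
    (h : ∀ l < j, y B' b l = y B b l) : query ζ y B' b j = query ζ y B b j :=
  congrArg (ζ j b) (funext fun l => h l l.isLt)

lemma product_conj_eq_of_fix (hy : ∀ A b i, y A b i = A *ᵥ query ζ y A b i)
    {Q B : Matrix (Fin n) (Fin n) ℝ} {b : Fin n → ℝ} (hQ : Qᵀ * Q = 1) {i : ℕ}
    (hfix : ∀ j < i, Q *ᵥ query ζ y B b j = query ζ y B b j ∧ Q *ᵥ y B b j = y B b j) :
    ∀ j < i, y (Qᵀ * B * Q) b j = y B b j := by
  intro j
  induction j using Nat.strong_induction_on with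
  | _ j ih =>
    intro hj
    rw [hy (Qᵀ * B * Q), query_congr fun l hl => ih l hl (hl.trans hj), ← mulVec_mulVec,
      ← mulVec_mulVec, (hfix j hj).1, ← hy]
    exact transpose_mulVec_eq_of_mulVec_eq hQ (hfix j hj).2

lemma exists_orthConjFixing_information_mem_krylov
    (hy : ∀ A b i, y A b i = A *ᵥ query ζ y A b i) {A : Matrix (Fin n) (Fin n) ℝ}
    {b : Fin n → ℝ} {k : ℕ} (hA : (A ^ (2 * k + 1)) *ᵥ b ∉ krylov A b (2 * k + 1)) :
    ∀ i ≤ k, ∃ B, OrthConjFixing b A B ∧ ∀ j < i,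
      query ζ y B b j ∈ krylov B b (2 * i + 1) ∧ y B b j ∈ krylov B b (2 * i + 1) := by
  intro i hi
  induction i with
  | zero => exact ⟨A, ⟨1, by simp, by simp, by simp⟩, fun j hj => absurd hj j.not_lt_zero⟩
  | succ i ih =>
    obtain ⟨B, hAB, hmem⟩ := ih (by omega)
    obtain ⟨Q, hQ, hfix, hz⟩ := exists_conj_mem_krylov_succ (2 * i).succ_pos
      (hAB.pow_mulVec_not_mem_krylov (pow_mulVec_not_mem_krylov_of_le hA (by omega)))
      (query ζ y B b i)
    have hK := krylov_conj_of_fix hQ (2 * i).succ_pos hfix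
    have hy' := product_conj_eq_of_fix hy hQ fun j hj =>
      ⟨hfix _ (hmem j hj).1, hfix _ (hmem j hj).2⟩
    have hq : ∀ j ≤ i, query ζ y (Qᵀ * B * Q) b j = query ζ y B b j :=
      fun j hj => query_congr fun l hl => hy' l (by omega)
    refine ⟨Qᵀ * B * Q, hAB.trans ⟨Q, hQ, hfix b (mem_krylov_self B b (by omega)), rfl⟩,
      fun j hj => ?_⟩
    have hmono := krylov_mono (Qᵀ * B * Q) b (show 2 * i + 1 ≤ 2 * (i + 1) + 1 by omega)
    rcases Nat.lt_succ_iff_lt_or_eq.mp hj with hj | rfl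
    · rw [hq j hj.le, hy' j hj]
      exact ⟨hmono (hK.ge (hmem j hj).1), hmono (hK.ge (hmem j hj).2)⟩
    · rw [← hq j le_rfl] at hz
      exact ⟨krylov_mono _ _ (by omega) hz, hy _ b j ▸ mulVec_mem_krylov_succ _ b hz⟩

end AdaptiveInformation

lemma exists_krylov_residual_le {F : Set (Matrix (Fin n) (Fin n) ℝ)}
    (hF : ∀ A ∈ F, ∀ Q : Matrix (Fin n) (Fin n) ℝ, Qᵀ * Q = 1 → Qᵀ * A * Q ∈ F)
    {ζ : (i : ℕ) → (Fin n → ℝ) → (Fin i → (Fin n → ℝ)) → (Fin n → ℝ)}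
    {y : Matrix (Fin n) (Fin n) ℝ → (Fin n → ℝ) → ℕ → (Fin n → ℝ)}
    (hy : ∀ A b i, y A b i = A *ᵥ query ζ y A b i) {k : ℕ} {ε : ℝ}
    {φ : (Fin n → ℝ) × (Fin k → (Fin n → ℝ)) → (Fin n → ℝ)} {b : Fin n → ℝ}
    (hφ : ∀ B ∈ F, euclNorm (B *ᵥ φ (b, fun i : Fin k => y B b i) - b) ≤ ε)
    {A : Matrix (Fin n) (Fin n) ℝ} (hA : A ∈ F)
    (hAb : (A ^ (2 * k + 1)) *ᵥ b ∉ krylov A b (2 * k + 1)) :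
    ∃ x ∈ krylov A b (2 * k + 2), euclNorm (A *ᵥ x - b) ≤ ε := by
  obtain ⟨B, hAB, hmem⟩ := exists_orthConjFixing_information_mem_krylov hy hAb k le_rfl
  obtain ⟨Q, hQ, hfix, hx⟩ := exists_conj_mem_krylov_succ (2 * k).succ_pos
    (hAB.pow_mulVec_not_mem_krylov hAb) (φ (b, fun i : Fin k => y B b i))
  have hAB' : OrthConjFixing b A (Qᵀ * B * Q) :=
    hAB.trans ⟨Q, hQ, hfix b (mem_krylov_self B b (2 * k).succ_pos), rfl⟩
  have hinfo : (fun i : Fin k => y (Qᵀ * B * Q) b i) = fun i : Fin k => y B b i :=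
    funext fun i => product_conj_eq_of_fix hy hQ
      (fun j hj => ⟨hfix _ (hmem j hj).1, hfix _ (hmem j hj).2⟩) i i.isLt
  have hres := hφ _ (hAB'.mem hF hA)
  rw [hinfo] at hres
  exact hAB'.exists_residual_le hx hres

lemma exists_krylov_algorithm (m : ℕ) (ε : ℝ) :
    ∃ φ' : (Fin n → ℝ) × (Fin (m + 1) → (Fin n → ℝ)) → (Fin n → ℝ),
      ∀ (A : Matrix (Fin n) (Fin n) ℝ) (b : Fin n → ℝ),
        (∃ x ∈ krylov A b (m + 1), euclNorm (A *ᵥ x - b) ≤ ε) →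
        euclNorm (A *ᵥ φ' (b, fun i => (A ^ ((i : ℕ) + 1)) *ᵥ b) - b) ≤ ε := by
  classical
  -- `Fin.cons b (Fin.init v)` lists `b, A b, …, A^m b` when `v` is the Krylov information.
  refine ⟨fun p => if h : ∃ c : Fin (m + 1) → ℝ, euclNorm (∑ j, c j • p.2 j - p.1) ≤ ε
    then ∑ j, h.choose j • (Fin.cons p.1 (Fin.init p.2) : Fin (m + 1) → Fin n → ℝ) j else 0,
    fun A b ⟨x, hx, hres⟩ => ?_⟩
  have hbasis : ∀ j, (Fin.cons b (Fin.init fun i : Fin (m + 1) => (A ^ ((i : ℕ) + 1)) *ᵥ b) :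
      Fin (m + 1) → Fin n → ℝ) j = (A ^ (j : ℕ)) *ᵥ b :=
    Fin.cases (by simp) fun i => by simp [Fin.init]
  have hAsum : ∀ c : Fin (m + 1) → ℝ,
      A *ᵥ ∑ j, c j • (A ^ (j : ℕ)) *ᵥ b = ∑ j, c j • (A ^ ((j : ℕ) + 1)) *ᵥ b := fun c => by
    simp only [mulVec_sum, mulVec_smul, mulVec_mulVec, pow_succ']
  obtain ⟨c, rfl⟩ := (mem_krylov_iff A b).mp hx
  have hex : ∃ c : Fin (m + 1) → ℝ, euclNorm (∑ j, c j • (A ^ ((j : ℕ) + 1)) *ᵥ b - b) ≤ ε :=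
    ⟨c, hAsum c ▸ hres⟩
  simp only [dif_pos hex, hbasis, hAsum]
  exact hex.choose_spec

end Krylov

open Krylov in
theorem stmt_10_general (n k : ℕ) (F : Set (Matrix (Fin n) (Fin n) ℝ))
    (hFns : ∀ A ∈ F, IsUnit A)
    (hFoi : ∀ A ∈ F, ∀ Q : Matrix (Fin n) (Fin n) ℝ, Qᵀ * Q = 1 → Qᵀ * A * Q ∈ F)
    (ε : ℝ)
    (ζ : (i : ℕ) → (Fin n → ℝ) → (Fin i → (Fin n → ℝ)) → (Fin n → ℝ))
    (y : Matrix (Fin n) (Fin n) ℝ → (Fin n → ℝ) → ℕ → (Fin n → ℝ))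
    (hy : ∀ A b i, y A b i = A.mulVec (ζ i b (fun j : Fin i => y A b j.1)))
    (φ : (Fin n → ℝ) × (Fin k → (Fin n → ℝ)) → (Fin n → ℝ))
    (hφ : ∀ A ∈ F, ∀ b : Fin n → ℝ, euclNorm b = 1 →
      euclNorm (A.mulVec (φ (b, fun i => y A b i.1)) - b) ≤ ε) :
    ∃ φ' : (Fin n → ℝ) × (Fin (2 * k + 2) → (Fin n → ℝ)) → (Fin n → ℝ),
      ∀ A ∈ F, ∀ b : Fin n → ℝ, euclNorm b = 1 →
        euclNorm (A.mulVec (φ' (b, fun i => (A ^ ((i : ℕ) + 1)).mulVec b)) - b) ≤ ε := by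
  obtain ⟨φ', hφ'⟩ := exists_krylov_algorithm (n := n) (2 * k + 1) ε
  refine ⟨φ', fun A hA b hb => hφ' A b ?_⟩
  by_cases hAb : (A ^ (2 * k + 1)) *ᵥ b ∈ krylov A b (2 * k + 1)
  · obtain ⟨x, hx, hAx⟩ := exists_mem_krylov_mulVec_eq (hFns A hA) (2 * k).succ_pos hAb
    refine ⟨x, krylov_mono A b (2 * k + 1).le_succ hx, ?_⟩
    have hε : 0 ≤ ε := (Real.sqrt_nonneg _).trans (hφ A hA b hb)
    simpa [hAx, euclNorm] using hε
  · exact exists_krylov_residual_le hFoi hy (fun B hB => hφ B hB b hb) hA hAb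

/-- **Krylov information is optimal to within a multiplicative factor of 2.**
Let `F` be an orthogonally invariant class of nonsingular `n × n` matrices.  Suppose
adaptive information of cardinality `k` using matrix-vector multiplications (the maps
`ζ` choose `z₁ = ζ 0 b` and `z_{i+1} = ζ (i+1) b (Az₁, …, Az_i)`, and `y A b i = A z_{i+1}`
are the computed products) together with an algorithm `φ` achieves residual `≤ ε` for
every `A ∈ F` and unit `b`.  Then some algorithm `φ'` using Krylov information of
cardinality `2k + 2` also achieves residual `≤ ε` for every `A ∈ F` and unit `b`. -/
theorem stmt_10 (n k : ℕ) (F : Set (Matrix (Fin n) (Fin n) ℝ))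
    (hFns : ∀ A ∈ F, IsUnit A)
    (hFoi : ∀ A ∈ F, ∀ Q : Matrix (Fin n) (Fin n) ℝ, Qᵀ * Q = 1 → Qᵀ * A * Q ∈ F)
    (ε : ℝ) (hε : 0 < ε)
    (ζ : (i : ℕ) → (Fin n → ℝ) → (Fin i → (Fin n → ℝ)) → (Fin n → ℝ))
    (y : Matrix (Fin n) (Fin n) ℝ → (Fin n → ℝ) → ℕ → (Fin n → ℝ))
    (hy : ∀ A b i, y A b i = A.mulVec (ζ i b (fun j : Fin i => y A b j.1)))
    (φ : (Fin n → ℝ) × (Fin k → (Fin n → ℝ)) → (Fin n → ℝ))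
    (hφ : ∀ A ∈ F, ∀ b : Fin n → ℝ, euclNorm b = 1 →
      euclNorm (A.mulVec (φ (b, fun i => y A b i.1)) - b) ≤ ε) :
    ∃ φ' : (Fin n → ℝ) × (Fin (2 * k + 2) → (Fin n → ℝ)) → (Fin n → ℝ),
      ∀ A ∈ F, ∀ b : Fin n → ℝ, euclNorm b = 1 →
        euclNorm (A.mulVec (φ' (b, fun i => (A ^ ((i : ℕ) + 1)).mulVec b)) - b) ≤ ε :=
  stmt_10_general n k F hFns hFoi ε ζ y hy φ hφ
end

section
/- Let M > 1 be a real number and let k ≥ 0 be an integer. Then the minimum over all real polynomials p with deg p ≤ k and p(0) = 1 of sup_{x ∈ [1, M]} |p(x)| equals 1 / T_k((M+1)/(M−1)), where T_k is the degree-k Chebyshev polynomial of the first kind; moreover the minimum is attained (by a suitably scaled and shifted Chebyshev polynomial). This quantity is the worst-case residual of the minimal residual algorithm after k steps on the class of symmetric positive definite matrices with condition number at most M. -/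
/-!
The decreasing affine map `ℓ x = (a + b - 2x) / (b - a)` sends `[a, b]` onto `[-1, 1]` and any
`c ≤ a` to `ℓ c ≥ 1`, where `T_k ≥ 1`. The polynomial `T_k (ℓ x) / T_k (ℓ c)` equals `1` at `c`,
and its supremum on `[a, b]` is `1 / T_k (ℓ c)`, attained at `x = a`. Conversely, if `|p| ≤ s` on
`[a, b]`, then `p ∘ ℓ⁻¹ / s` is bounded by `1` on `[-1, 1]`, so by the extremal property of
Chebyshev polynomials it is at most `T_k` on `[1, ∞)`; at `ℓ c` this reads `p c ≤ s T_k (ℓ c)`.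
The theorem is the case `a = 1`, `b = M`, `c = 0`.
-/

open Polynomial Polynomial.Chebyshev Set

namespace Polynomial

variable {a b c : ℝ}

lemma abs_eval_le_iSup_Icc (p : ℝ[X]) {x : ℝ} (hx : x ∈ Icc a b) :
    |p.eval x| ≤ ⨆ y : Icc a b, |p.eval (y : ℝ)| :=
  le_ciSup (f := fun y : Icc a b => |p.eval (y : ℝ)|) (isCompact_range (by fun_prop)).bddAbove
    ⟨x, hx⟩

noncomputable def normalizeIcc (a b : ℝ) : ℝ[X] := C ((a + b) / (b - a)) - C (2 / (b - a)) * X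

noncomputable def denormalizeIcc (a b : ℝ) : ℝ[X] := C ((a + b) / 2) - C ((b - a) / 2) * X

lemma eval_normalizeIcc (x : ℝ) : (normalizeIcc a b).eval x = (a + b - 2 * x) / (b - a) := by
  simp only [normalizeIcc, eval_sub, eval_mul, eval_C, eval_X]
  ring

lemma eval_denormalizeIcc (y : ℝ) : (denormalizeIcc a b).eval y = (a + b - (b - a) * y) / 2 := by
  simp only [denormalizeIcc, eval_sub, eval_mul, eval_C, eval_X]
  ring

lemma natDegree_normalizeIcc_le : (normalizeIcc a b).natDegree ≤ 1 :=
  natDegree_sub_le_of_le (natDegree_C _).le ((natDegree_C_mul_le _ _).trans natDegree_X_le)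

lemma natDegree_denormalizeIcc_le : (denormalizeIcc a b).natDegree ≤ 1 :=
  natDegree_sub_le_of_le (natDegree_C _).le ((natDegree_C_mul_le _ _).trans natDegree_X_le)

lemma eval_normalizeIcc_left (hab : a < b) : (normalizeIcc a b).eval a = 1 := by
  rw [eval_normalizeIcc, div_eq_one_iff_eq (sub_pos.2 hab).ne']
  ring

lemma one_le_eval_normalizeIcc (hab : a < b) (hca : c ≤ a) : 1 ≤ (normalizeIcc a b).eval c := by
  rw [eval_normalizeIcc, one_le_div (sub_pos.2 hab)]
  linarith

lemma eval_normalizeIcc_mem_Icc (hab : a < b) {x : ℝ} (hx : x ∈ Icc a b) :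
    (normalizeIcc a b).eval x ∈ Icc (-1) 1 := by
  have hba := sub_pos.2 hab
  rw [eval_normalizeIcc, mem_Icc, le_div_iff₀ hba, div_le_one hba]
  constructor <;> linarith [hx.1, hx.2]

lemma eval_denormalizeIcc_mem_Icc (hab : a ≤ b) {y : ℝ} (hy : y ∈ Icc (-1) 1) :
    (denormalizeIcc a b).eval y ∈ Icc a b := by
  rw [eval_denormalizeIcc, mem_Icc]
  constructor <;> nlinarith [hy.1, hy.2]

lemma eval_denormalizeIcc_eval_normalizeIcc (hab : a ≠ b) (x : ℝ) :
    (denormalizeIcc a b).eval ((normalizeIcc a b).eval x) = x := by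
  rw [eval_denormalizeIcc, eval_normalizeIcc]
  field_simp [sub_ne_zero.2 hab.symm]
  ring

noncomputable def chebyshevResidual (a b c : ℝ) (k : ℕ) : ℝ[X] :=
  C ((T ℝ k).eval ((normalizeIcc a b).eval c))⁻¹ * (T ℝ k).comp (normalizeIcc a b)

lemma natDegree_chebyshevResidual_le (a b c : ℝ) (k : ℕ) :
    (chebyshevResidual a b c k).natDegree ≤ k := by
  refine (natDegree_C_mul_le _ _).trans (natDegree_comp_le.trans ?_)
  simpa [natDegree_T] using Nat.mul_le_mul_left k natDegree_normalizeIcc_le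

lemma eval_chebyshevResidual (a b c : ℝ) (k : ℕ) (x : ℝ) :
    (chebyshevResidual a b c k).eval x =
      (T ℝ k).eval ((normalizeIcc a b).eval x) / (T ℝ k).eval ((normalizeIcc a b).eval c) := by
  rw [chebyshevResidual, eval_mul, eval_C, eval_comp, inv_mul_eq_div]

lemma eval_T_normalizeIcc_pos (hab : a < b) (hca : c ≤ a) (k : ℕ) :
    0 < (T ℝ k).eval ((normalizeIcc a b).eval c) :=
  zero_lt_one.trans_le (one_le_eval_T_real k (one_le_eval_normalizeIcc hab hca))

lemma eval_chebyshevResidual_self (hab : a < b) (hca : c ≤ a) (k : ℕ) :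
    (chebyshevResidual a b c k).eval c = 1 := by
  rw [eval_chebyshevResidual, div_self (eval_T_normalizeIcc_pos hab hca k).ne']

lemma iSup_abs_eval_chebyshevResidual (hab : a < b) (hca : c ≤ a) (k : ℕ) :
    ⨆ x : Icc a b, |(chebyshevResidual a b c k).eval (x : ℝ)| =
      1 / (T ℝ k).eval ((normalizeIcc a b).eval c) := by
  have hT := eval_T_normalizeIcc_pos hab hca k
  have : Nonempty (Icc a b) := (nonempty_Icc.2 hab.le).to_subtype
  refine le_antisymm (ciSup_le fun x => ?_) ?_
  · rw [eval_chebyshevResidual, abs_div, abs_of_pos hT]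
    gcongr
    exact abs_eval_T_real_le_one k (abs_le.2 (eval_normalizeIcc_mem_Icc hab x.2))
  · calc 1 / (T ℝ k).eval ((normalizeIcc a b).eval c)
        = |(chebyshevResidual a b c k).eval a| := by
          rw [eval_chebyshevResidual, eval_normalizeIcc_left hab, T_eval_one,
            abs_of_pos (by positivity)]
      _ ≤ _ := abs_eval_le_iSup_Icc _ (left_mem_Icc.2 hab.le)

lemma eval_le_mul_eval_T_of_abs_eval_le {p : ℝ[X]} {k : ℕ} (hp : p.natDegree ≤ k)
    (hab : a < b) (hca : c ≤ a) {s : ℝ} (hs : 0 < s) (hbound : ∀ x ∈ Icc a b, |p.eval x| ≤ s) :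
    p.eval c ≤ s * (T ℝ k).eval ((normalizeIcc a b).eval c) := by
  set P := C s⁻¹ * p.comp (denormalizeIcc a b)
  have hdeg : P.degree ≤ k := by
    refine degree_le_of_natDegree_le ((natDegree_C_mul_le _ _).trans (natDegree_comp_le.trans ?_))
    simpa using Nat.mul_le_mul hp natDegree_denormalizeIcc_le
  have hbnd : ∀ y ∈ Icc (-1) 1, |P.eval y| ≤ 1 := by
    intro y hy
    rw [eval_mul, eval_C, eval_comp, abs_mul, abs_inv, abs_of_pos hs, inv_mul_le_one₀ hs]
    exact hbound _ (eval_denormalizeIcc_mem_Icc hab.le hy)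
  have h := eval_iterate_derivative_le_of_forall_abs_le_one (k := 0)
    (one_le_eval_normalizeIcc hab hca) hdeg hbnd
  rwa [Function.iterate_zero_apply, Function.iterate_zero_apply, eval_mul, eval_C, eval_comp,
    eval_denormalizeIcc_eval_normalizeIcc hab.ne, inv_mul_le_iff₀ hs] at h

theorem isLeast_iSup_abs_eval_Icc (hab : a < b) (hca : c ≤ a) (k : ℕ) :
    IsLeast
      {e : ℝ | ∃ p : ℝ[X], p.natDegree ≤ k ∧ p.eval c = 1 ∧ e = ⨆ x : Icc a b, |p.eval (x : ℝ)|}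
      (1 / (T ℝ k).eval ((normalizeIcc a b).eval c)) := by
  refine ⟨⟨chebyshevResidual a b c k, natDegree_chebyshevResidual_le a b c k,
    eval_chebyshevResidual_self hab hca k, (iSup_abs_eval_chebyshevResidual hab hca k).symm⟩, ?_⟩
  rintro _ ⟨p, hp, hpc, rfl⟩
  -- Bound `|p|` by `S + ε` rather than by the supremum `S`, which may vanish.
  refine le_of_forall_pos_le_add fun ε hε => ?_
  have hS : 0 ≤ ⨆ x : Icc a b, |p.eval (x : ℝ)| := Real.iSup_nonneg fun _ => abs_nonneg _
  rw [div_le_iff₀ (eval_T_normalizeIcc_pos hab hca k), ← hpc]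
  exact eval_le_mul_eval_T_of_abs_eval_le hp hab hca (by positivity)
    fun x hx => (abs_eval_le_iSup_Icc p hx).trans (le_add_of_nonneg_right hε.le)

end Polynomial

/-- **Chebyshev minimization on `[1, M]`.**
Among all real polynomials `p` of degree `≤ k` with `p(0) = 1`, the least possible
value of `sup_{x ∈ [1,M]} |p(x)|` is `1 / T_k((M+1)/(M−1))`, where `T_k` is the
degree-`k` Chebyshev polynomial of the first kind, and the minimum is attained.
This is the worst-case residual of the minimal residual algorithm after `k` steps on
symmetric positive definite matrices with condition number at most `M`. -/
theorem stmt_11 (M : ℝ) (hM : 1 < M) (k : ℕ) :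
    IsLeast
      {e : ℝ | ∃ p : Polynomial ℝ, p.natDegree ≤ k ∧ p.eval 0 = 1 ∧
        e = ⨆ x : Set.Icc (1 : ℝ) M, |p.eval (x : ℝ)|}
      (1 / (Polynomial.Chebyshev.T ℝ k).eval ((M + 1) / (M - 1))) := by
  convert isLeast_iSup_abs_eval_Icc hM zero_le_one k using 4
  rw [eval_normalizeIcc]
  ring
end

section
/- Let M > 1 be a real number and let k ≥ 0 be an integer. Then the minimum over all real polynomials p with deg p ≤ k and p(0) = 1 of sup_{x ∈ [−M,−1] ∪ [1,M]} |p(x)| equals 1 / T_{⌊k/2⌋}((M²+1)/(M²−1)), where T_j is the degree-j Chebyshev polynomial of the first kind; the minimum is attained by an even polynomial. This quantity is the worst-case residual of the minimal residual algorithm after k steps on the class of symmetric (possibly indefinite) matrices with condition number at most M, and explains why the required number of steps doubles in rate (M in place of √M) when positive definiteness is dropped. -/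
open Polynomial Polynomial.Chebyshev Real Finset

section Aux

lemma chebT_natDegree_le : ∀ n : ℕ, (T ℝ (n : ℤ)).natDegree ≤ n := by
  intro n
  induction n using Nat.strong_induction_on with
  | _ n ih =>
    match n, ih with
    | 0, _ => simp [T_zero]
    | 1, _ => simp [T_one]
    | (n+2), ih =>
      have h1 := ih (n+1) (by omega)
      have h0 := ih n (by omega)
      rw [show ((n+2 : ℕ) : ℤ) = (n : ℤ) + 2 by push_cast; ring, T_add_two]
      refine le_trans (natDegree_sub_le _ _) ?_
      simp only [max_le_iff]
      refine ⟨le_trans natDegree_mul_le ?_, by omega⟩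
      have hx : (2 * X : Polynomial ℝ).natDegree ≤ 1 := by
        compute_degree
      push_cast at h1
      omega

lemma chebT_eval_neg (n : ℕ) (x : ℝ) :
    (T ℝ (n : ℤ)).eval (-x) = (-1)^n * (T ℝ (n : ℤ)).eval x := by
  induction n using Nat.strong_induction_on with
  | _ n ih =>
    match n, ih with
    | 0, _ => simp [T_zero]
    | 1, _ => simp [T_one]
    | (n+2), ih =>
      have h1 := ih (n+1) (by omega)
      have h0 := ih n (by omega)
      rw [show ((n+2 : ℕ) : ℤ) = (n : ℤ) + 2 by push_cast; ring, T_add_two]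
      simp only [eval_sub, eval_mul, eval_ofNat, eval_X] at *
      push_cast at *
      rw [h1, h0]
      ring

lemma chebT_abs_le (n : ℤ) (x : ℝ) (hx : x ∈ Set.Icc (-1:ℝ) 1) :
    |(T ℝ n).eval x| ≤ 1 := by
  have : x = Real.cos (Real.arccos x) := (Real.cos_arccos hx.1 hx.2).symm
  rw [this, T_real_cos]
  exact Real.abs_cos_le_one _

lemma chebT_one_le (c : ℝ) (hc : 1 ≤ c) : ∀ n : ℕ,
    1 ≤ (T ℝ (n : ℤ)).eval c ∧ (T ℝ (n : ℤ)).eval c ≤ (T ℝ ((n:ℤ) + 1)).eval c := by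
  intro n
  induction n with
  | zero => simp [T_zero, T_one]; linarith
  | succ n ih =>
    obtain ⟨h1, h2⟩ := ih
    have key : (T ℝ ((n:ℤ) + 2)).eval c = 2 * c * (T ℝ ((n:ℤ)+1)).eval c - (T ℝ (n:ℤ)).eval c := by
      rw [T_add_two]; simp
    constructor
    · push_cast; linarith
    · push_cast
      rw [show ((n:ℤ)+1+1) = (n:ℤ)+2 from by ring, key]
      nlinarith

lemma chebT_eval_one (n : ℕ) : (T ℝ (n : ℤ)).eval 1 = 1 := by
  have := T_real_cos 0 (n : ℤ)
  simpa using this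

noncomputable def nodes (m : ℕ) (j : ℕ) : ℝ := Real.cos (j * π / m)

lemma nodes_mem_Icc {m : ℕ} (j : ℕ) : nodes m j ∈ Set.Icc (-1:ℝ) 1 :=
  ⟨Real.neg_one_le_cos _, Real.cos_le_one _⟩

lemma nodes_strictAnti {m : ℕ} (hm : 1 ≤ m) :
    ∀ i ∈ Finset.range (m+1), ∀ j ∈ Finset.range (m+1),
    i < j → nodes m j < nodes m i := by
  intro i hi j hj hij
  simp only [Finset.mem_range] at hi hj
  have hπ := Real.pi_pos
  have hm' : (0:ℝ) < m := by
    have : (1:ℝ) ≤ m := by exact_mod_cast hm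
    linarith
  have h1 : (i:ℝ) * π / m ∈ Set.Icc 0 π := by
    constructor
    · positivity
    · rw [div_le_iff₀ hm']
      have : (i:ℝ) ≤ m := by exact_mod_cast by omega
      nlinarith
  have h2 : (j:ℝ) * π / m ∈ Set.Icc 0 π := by
    constructor
    · positivity
    · rw [div_le_iff₀ hm']
      have : (j:ℝ) ≤ m := by exact_mod_cast by omega
      nlinarith
  apply Real.strictAntiOn_cos h1 h2
  have hij' : (i:ℝ) < j := by exact_mod_cast hij
  apply div_lt_div_of_pos_right ?_ hm'
  nlinarith

lemma nodes_injOn {m : ℕ} (hm : 1 ≤ m) : Set.InjOn (nodes m) (Finset.range (m+1)) := by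
  intro i hi j hj hij
  by_contra hne
  rcases Nat.lt_or_ge i j with h | h
  · exact absurd hij (ne_of_lt (nodes_strictAnti hm i hi j hj h)).symm
  · have h2 : j < i := by omega
    exact absurd hij (ne_of_lt (nodes_strictAnti hm j hj i hi h2))

lemma chebT_eval_nodes {m : ℕ} (hm : 1 ≤ m) (j : ℕ) :
    (T ℝ (m : ℤ)).eval (nodes m j) = (-1)^j := by
  unfold nodes
  rw [T_real_cos]
  have hm0 : m ≠ 0 := by omega
  have hm' : (m:ℝ) ≠ 0 := by exact_mod_cast hm0
  have h5 : ((m:ℤ):ℝ) * ((j:ℝ) * π / m) = (j:ℝ) * π := by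
    push_cast; field_simp
  rw [h5]
  simpa using Real.cos_nat_mul_pi_sub 0 j

lemma erase_range_eq {m : ℕ} (i : ℕ) (hi : i ∈ Finset.range (m+1)) :
    (Finset.range (m+1)).erase i = Finset.range i ∪ Finset.Ico (i+1) (m+1) := by
  ext j
  simp only [Finset.mem_erase, Finset.mem_range, Finset.mem_union, Finset.mem_Ico]
  simp only [Finset.mem_range] at hi
  omega

lemma basis_eval_sign {m : ℕ} (i : ℕ) (hi : i ∈ Finset.range (m+1)) (hm : 1 ≤ m)
    (Y : ℝ) (hY : Y < -1) :
    0 ≤ (-1:ℝ)^(m+i) * (Lagrange.basis (Finset.range (m+1)) (nodes m) i).eval Y := by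
  have hi' : i < m + 1 := Finset.mem_range.mp hi
  have hanti : ∀ a ∈ Finset.range (m+1), ∀ b ∈ Finset.range (m+1),
      a < b → nodes m b < nodes m a := nodes_strictAnti hm
  have hYlt : ∀ j, Y < nodes m j := fun j => lt_of_lt_of_le hY (nodes_mem_Icc j).1
  set g : ℕ → ℝ := fun j => (nodes m i - nodes m j)⁻¹ * (Y - nodes m j) with hg
  have hBeval : (Lagrange.basis (Finset.range (m+1)) (nodes m) i).eval Y
      = ∏ j ∈ (Finset.range (m+1)).erase i, g j := by
    rw [Lagrange.basis, eval_prod]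
    refine Finset.prod_congr rfl fun j hj => ?_
    rw [Lagrange.basisDivisor, eval_mul, eval_C, eval_sub, eval_X, eval_C]
  rw [hBeval, erase_range_eq i hi,
    Finset.prod_union (by simp only [Finset.disjoint_left, Finset.mem_range, Finset.mem_Ico]; omega)]
  have hpos1 : 0 < ∏ j ∈ Finset.range i, g j := by
    apply Finset.prod_pos
    intro j hj
    have hj' : j < i := Finset.mem_range.mp hj
    have h1 : nodes m i < nodes m j := hanti j (by simp; omega) i hi hj'
    have h2 : Y - nodes m j < 0 := by linarith [hYlt j]
    have h3 : nodes m i - nodes m j < 0 := by linarith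
    exact mul_pos_of_neg_of_neg (inv_lt_zero.mpr h3) h2
  have hneg : ∏ j ∈ Finset.Ico (i+1) (m+1), (-(g j))
      = (-1:ℝ)^(m-i) * ∏ j ∈ Finset.Ico (i+1) (m+1), g j := by
    calc ∏ j ∈ Finset.Ico (i+1) (m+1), (-(g j))
        = ∏ j ∈ Finset.Ico (i+1) (m+1), ((-1:ℝ) * g j) := by simp
      _ = (∏ _j ∈ Finset.Ico (i+1) (m+1), (-1:ℝ)) * ∏ j ∈ Finset.Ico (i+1) (m+1), g j :=
          Finset.prod_mul_distrib
      _ = (-1:ℝ)^(m-i) * ∏ j ∈ Finset.Ico (i+1) (m+1), g j := by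
          rw [Finset.prod_const, Nat.card_Ico]
          congr 2
          omega
  have hIco : ∏ j ∈ Finset.Ico (i+1) (m+1), g j
      = (-1:ℝ)^(m-i) * ∏ j ∈ Finset.Ico (i+1) (m+1), (-(g j)) := by
    rw [hneg, ← mul_assoc, ← pow_add, show (m-i)+(m-i) = 2*(m-i) by ring, pow_mul]
    norm_num
  have hpos2 : 0 < ∏ j ∈ Finset.Ico (i+1) (m+1), (-(g j)) := by
    apply Finset.prod_pos
    intro j hj
    simp only [Finset.mem_Ico] at hj
    have h1 : nodes m j < nodes m i := hanti i hi j (by simp; omega) (by omega)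
    have h2 : Y - nodes m j < 0 := by linarith [hYlt j]
    have h3 : 0 < nodes m i - nodes m j := by linarith
    have : g j < 0 := mul_neg_of_pos_of_neg (inv_pos.mpr h3) h2
    linarith
  rw [hIco]
  have hsgn : (-1:ℝ)^(m+i) * ((-1:ℝ)^(m-i)) = 1 := by
    rw [← pow_add]
    have : m + i + (m - i) = 2*m := by omega
    rw [this]
    simp [pow_mul]
  calc (0:ℝ) ≤ ((-1:ℝ)^(m+i) * (-1:ℝ)^(m-i)) * ((∏ j ∈ Finset.range i, g j) *
        ∏ j ∈ Finset.Ico (i+1) (m+1), (-(g j))) := by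
        rw [hsgn]; positivity
    _ = (-1:ℝ)^(m+i) * ((∏ j ∈ Finset.range i, g j) *
        ((-1:ℝ)^(m-i) * ∏ j ∈ Finset.Ico (i+1) (m+1), (-(g j)))) := by ring

lemma cheb_growth (m : ℕ) (h : Polynomial ℝ) (hdeg : h.natDegree ≤ m) (K : ℝ)
    (hb : ∀ u ∈ Set.Icc (-1:ℝ) 1, |h.eval u| ≤ K) (c : ℝ) (hc : 1 < c) :
    |h.eval (-c)| ≤ K * (T ℝ (m:ℤ)).eval c := by
  have hK0 : 0 ≤ K := le_trans (abs_nonneg _) (hb 0 (by norm_num))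
  rcases Nat.eq_zero_or_pos m with hm0 | hm
  · subst hm0
    have hC : h = C (h.coeff 0) := (Polynomial.eq_C_of_natDegree_le_zero hdeg)
    rw [hC]
    simp only [eval_C, Nat.cast_zero, T_zero, eval_one, mul_one]
    have := hb 0 (by norm_num)
    rwa [hC, eval_C] at this
  · set v := nodes m with hv
    set tt := Finset.range (m+1) with htt
    have hvs : Set.InjOn v tt := nodes_injOn hm
    have hdlt : h.degree < tt.card := by
      refine lt_of_le_of_lt (Polynomial.degree_le_natDegree) ?_
      rw [htt, Finset.card_range]
      exact_mod_cast lt_of_le_of_lt (Nat.cast_le.mpr hdeg) (by exact_mod_cast Nat.lt_succ_self m)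
    have hTdlt : (T ℝ (m:ℤ)).degree < tt.card := by
      refine lt_of_le_of_lt (Polynomial.degree_le_natDegree) ?_
      rw [htt, Finset.card_range]
      exact_mod_cast lt_of_le_of_lt (Nat.cast_le.mpr (chebT_natDegree_le m))
        (by exact_mod_cast Nat.lt_succ_self m)
    set Y : ℝ := -c with hYdef
    have hY : Y < -1 := by rw [hYdef]; linarith
    set B : ℕ → ℝ := fun i => (Lagrange.basis tt v i).eval Y with hB
    have hrep : h.eval Y = ∑ i ∈ tt, h.eval (v i) * B i := by
      conv_lhs => rw [Lagrange.eq_interpolate hvs hdlt]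
      rw [Lagrange.interpolate_apply, eval_finset_sum]
      exact Finset.sum_congr rfl fun i _ => by rw [eval_mul, eval_C]
    have hTrep : (T ℝ (m:ℤ)).eval Y = ∑ i ∈ tt, (-1:ℝ)^i * B i := by
      conv_lhs => rw [Lagrange.eq_interpolate hvs hTdlt]
      rw [Lagrange.interpolate_apply, eval_finset_sum]
      exact Finset.sum_congr rfl fun i _ => by
        rw [eval_mul, eval_C, hv, chebT_eval_nodes hm i]
    have hsign : ∀ i ∈ tt, |B i| = (-1:ℝ)^(m+i) * B i := by
      intro i hi
      have h0 := basis_eval_sign i (htt ▸ hi) hm Y hY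
      rcases le_or_gt 0 (B i) with hBi | hBi
      · rw [abs_of_nonneg hBi]
        rcases Nat.even_or_odd (m+i) with he | ho
        · rw [he.neg_one_pow]; ring
        · rw [ho.neg_one_pow] at h0 ⊢
          have h4 : B i ≤ 0 := by linarith
          have h5 : B i = 0 := le_antisymm h4 hBi
          rw [h5]; ring
      · rw [abs_of_neg hBi]
        rcases Nat.even_or_odd (m+i) with he | ho
        · rw [he.neg_one_pow] at h0; nlinarith
        · rw [ho.neg_one_pow]; ring
    have hsum : ∑ i ∈ tt, |B i| = (T ℝ (m:ℤ)).eval c := by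
      have h1 : ∑ i ∈ tt, |B i| = (-1:ℝ)^m * ∑ i ∈ tt, (-1:ℝ)^i * B i := by
        rw [Finset.mul_sum]
        refine Finset.sum_congr rfl fun i hi => ?_
        rw [hsign i hi, pow_add]; ring
      rw [h1, ← hTrep, hYdef, chebT_eval_neg m c, ← mul_assoc, ← pow_add,
        show m + m = 2*m by ring, pow_mul]
      norm_num
    calc |h.eval Y| ≤ ∑ i ∈ tt, |h.eval (v i) * B i| := hrep ▸ Finset.abs_sum_le_sum_abs _ _
      _ ≤ ∑ i ∈ tt, K * |B i| := by
          refine Finset.sum_le_sum fun i _ => ?_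
          rw [abs_mul]
          exact mul_le_mul_of_nonneg_right (hb (v i) (nodes_mem_Icc i)) (abs_nonneg _)
      _ = K * ∑ i ∈ tt, |B i| := by rw [Finset.mul_sum]
      _ = K * (T ℝ (m:ℤ)).eval c := by rw [hsum]

end Aux

set_option maxHeartbeats 1000000 in
/-- **Chebyshev minimization on `[−M,−1] ∪ [1,M]`.**
Among all real polynomials `p` of degree `≤ k` with `p(0) = 1`, the least possible
value of `sup_{x ∈ [−M,−1] ∪ [1,M]} |p(x)|` is `1 / T_{⌊k/2⌋}((M²+1)/(M²−1))`, where
`T_j` is the degree-`j` Chebyshev polynomial of the first kind; moreover the minimum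
is attained by an even polynomial.  This is the worst-case residual of the minimal
residual algorithm after `k` steps on symmetric (possibly indefinite) matrices with
condition number at most `M`. -/
theorem stmt_13 (M : ℝ) (hM : 1 < M) (k : ℕ) :
    IsLeast
      {e : ℝ | ∃ p : Polynomial ℝ, p.natDegree ≤ k ∧ p.eval 0 = 1 ∧
        e = ⨆ x : (Set.Icc (-M) (-1) ∪ Set.Icc (1 : ℝ) M : Set ℝ), |p.eval (x : ℝ)|}
      (1 / (Polynomial.Chebyshev.T ℝ (k / 2 : ℕ)).eval ((M ^ 2 + 1) / (M ^ 2 - 1))) ∧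
    ∃ p : Polynomial ℝ, p.natDegree ≤ k ∧ p.eval 0 = 1 ∧
      (∀ x : ℝ, p.eval (-x) = p.eval x) ∧
      (⨆ x : (Set.Icc (-M) (-1) ∪ Set.Icc (1 : ℝ) M : Set ℝ), |p.eval (x : ℝ)|) =
        1 / (Polynomial.Chebyshev.T ℝ (k / 2 : ℕ)).eval ((M ^ 2 + 1) / (M ^ 2 - 1)) := by
  have hMpos : (0:ℝ) < M := by linarith
  have hM2 : (0:ℝ) < M^2 - 1 := by nlinarith
  set m : ℕ := k / 2 with hm
  set c : ℝ := (M ^ 2 + 1) / (M ^ 2 - 1) with hc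
  have hc1 : 1 < c := by
    rw [hc, lt_div_iff₀ hM2]
    nlinarith
  set τ : ℝ := (T ℝ (m:ℤ)).eval c with hτ
  have hτ1 : 1 ≤ τ := (chebT_one_le c hc1.le m).1
  have hτpos : 0 < τ := by linarith
  set E : Set ℝ := Set.Icc (-M) (-1) ∪ Set.Icc (1 : ℝ) M with hE
  have h1E : (1:ℝ) ∈ E := Or.inr ⟨le_refl 1, hM.le⟩
  haveI : Nonempty E := ⟨⟨1, h1E⟩⟩
  have hEcompact : IsCompact E := IsCompact.union isCompact_Icc isCompact_Icc
  have hbdd : ∀ p : Polynomial ℝ, BddAbove (Set.range fun x : E => |p.eval (x:ℝ)|) := by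
    intro p
    have himg : BddAbove ((fun x => |p.eval x|) '' E) :=
      (hEcompact.image (p.continuous.abs)).bddAbove
    rwa [Set.image_eq_range] at himg
  have hsq : ∀ x ∈ E, x^2 ∈ Set.Icc (1:ℝ) (M^2) := by
    intro x hx
    rcases hx with hx | hx
    · obtain ⟨h1, h2⟩ := hx
      constructor <;> nlinarith
    · obtain ⟨h1, h2⟩ := hx
      constructor <;> nlinarith
  have h2m : 2 * m ≤ k := by omega
  -- lower bound
  have hlower : ∀ e : ℝ, (∃ p : Polynomial ℝ, p.natDegree ≤ k ∧ p.eval 0 = 1 ∧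
      e = ⨆ x : E, |p.eval (x : ℝ)|) → 1 / τ ≤ e := by
    rintro e ⟨p, hdeg, hp0, rfl⟩
    set e := ⨆ x : E, |p.eval (x : ℝ)| with he
    have hEle : ∀ x ∈ E, |p.eval x| ≤ e := by
      intro x hx
      exact le_ciSup (hbdd p) ⟨x, hx⟩
    -- the even-part polynomial in X
    set r : Polynomial ℝ := ∑ j ∈ Finset.range (m+1), C (p.coeff (2*j)) * X^j with hr
    have hrdeg : r.natDegree ≤ m := by
      rw [hr]
      refine Polynomial.natDegree_sum_le_of_forall_le _ _ fun j hj => ?_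
      refine le_trans (Polynomial.natDegree_C_mul_le _ _) ?_
      simp only [natDegree_X_pow]
      exact Nat.lt_succ_iff.mp (Finset.mem_range.mp hj)
    have hkey : ∀ x : ℝ, r.eval (x^2) = (p.eval x + p.eval (-x))/2 := by
      intro x
      have hpev : ∀ y : ℝ, p.eval y = ∑ j ∈ Finset.range (k+1), p.coeff j * y^j := by
        intro y
        exact Polynomial.eval_eq_sum_range' (Nat.lt_succ_of_le hdeg) y
      have hf : ∀ j : ℕ, p.coeff j * x^j + p.coeff j * (-x)^j
          = if Even j then 2 * p.coeff j * x^j else 0 := by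
        intro j
        rcases Nat.even_or_odd j with hj | hj
        · rw [if_pos hj, hj.neg_pow]; ring
        · rw [if_neg (Nat.not_even_iff_odd.mpr hj), hj.neg_pow]; ring
      have hsum : ∑ j ∈ Finset.range (k+1), (if Even j then 2 * p.coeff j * x^j else 0)
          = ∑ j ∈ Finset.range (m+1), 2 * p.coeff (2*j) * x^(2*j) := by
        have hinj : ∀ a ∈ Finset.range (m+1), ∀ b ∈ Finset.range (m+1),
            2*a = 2*b → a = b := by intro a _ b _ hab; omega
        calc ∑ j ∈ Finset.range (k+1), (if Even j then 2 * p.coeff j * x^j else 0)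
            = ∑ j ∈ (Finset.range (m+1)).image (fun j => 2*j),
                (if Even j then 2 * p.coeff j * x^j else 0) := by
              refine (Finset.sum_subset ?_ ?_).symm
              · intro j hj
                simp only [Finset.mem_image, Finset.mem_range] at hj ⊢
                obtain ⟨a, ha, rfl⟩ := hj
                omega
              · intro j hj hj2
                simp only [Finset.mem_image, Finset.mem_range] at hj hj2
                rw [if_neg]
                intro hje
                obtain ⟨a, rfl⟩ := hje
                exact hj2 ⟨a, by omega, by ring⟩
          _ = ∑ j ∈ Finset.range (m+1), (if Even (2*j) then 2 * p.coeff (2*j) * x^(2*j) else 0) :=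
              Finset.sum_image hinj
          _ = ∑ j ∈ Finset.range (m+1), 2 * p.coeff (2*j) * x^(2*j) := by
              refine Finset.sum_congr rfl fun j _ => ?_
              rw [if_pos (even_two_mul j)]
      have hrev : r.eval (x^2) = ∑ j ∈ Finset.range (m+1), p.coeff (2*j) * x^(2*j) := by
        rw [hr, eval_finset_sum]
        refine Finset.sum_congr rfl fun j _ => ?_
        rw [eval_mul, eval_C, eval_pow, eval_X, ← pow_mul]
      rw [hrev, hpev x, hpev (-x), ← Finset.sum_add_distrib]
      rw [Finset.sum_congr rfl (fun j _ => hf j), hsum]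
      rw [Finset.sum_div]
      refine Finset.sum_congr rfl fun j _ => by ring
    have hr0 : r.eval 0 = 1 := by
      have := hkey 0
      rw [show (0:ℝ)^2 = 0 by norm_num] at this
      rw [this, show (-0:ℝ) = 0 by norm_num, hp0]
      norm_num
    -- bounds for r on [1, M^2]
    have hrbound : ∀ t ∈ Set.Icc (1:ℝ) (M^2), |r.eval t| ≤ e := by
      intro t ht
      obtain ⟨ht1, ht2⟩ := ht
      set x := Real.sqrt t with hx
      have ht0 : (0:ℝ) ≤ t := by linarith
      have hx2 : x^2 = t := Real.sq_sqrt ht0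
      have hx1 : 1 ≤ x := by
        rw [hx]
        rw [show (1:ℝ) = Real.sqrt 1 by simp]
        exact Real.sqrt_le_sqrt ht1
      have hxM : x ≤ M := by
        rw [hx]
        calc Real.sqrt t ≤ Real.sqrt (M^2) := Real.sqrt_le_sqrt ht2
          _ = M := Real.sqrt_sq hMpos.le
      have hxE : x ∈ E := Or.inr ⟨hx1, hxM⟩
      have hnxE : -x ∈ E := Or.inl ⟨by linarith, by linarith⟩
      have := hkey x
      rw [hx2] at this
      rw [this]
      have h1 := hEle x hxE
      have h2 := hEle (-x) hnxE
      rw [abs_div]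
      rw [show |(2:ℝ)| = 2 by norm_num]
      rw [div_le_iff₀ (by norm_num : (0:ℝ) < 2)]
      calc |p.eval x + p.eval (-x)| ≤ |p.eval x| + |p.eval (-x)| := abs_add_le _ _
        _ ≤ e + e := add_le_add h1 h2
        _ = e * 2 := by ring
    -- transplant to [-1,1]
    set q : Polynomial ℝ := r.comp (C ((M^2-1)/2) * X + C ((M^2+1)/2)) with hq
    have hqdeg : q.natDegree ≤ m := by
      rw [hq]
      refine le_trans (natDegree_comp_le) ?_
      have hlin : (C ((M^2-1)/2) * X + C ((M^2+1)/2)).natDegree ≤ 1 := by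
        compute_degree
      calc r.natDegree * (C ((M^2-1)/2) * X + C ((M^2+1)/2)).natDegree
          ≤ m * 1 := Nat.mul_le_mul hrdeg hlin
        _ = m := by ring
    have hqb : ∀ u ∈ Set.Icc (-1:ℝ) 1, |q.eval u| ≤ e := by
      intro u hu
      obtain ⟨hu1, hu2⟩ := hu
      rw [hq, eval_comp, eval_add, eval_mul, eval_C, eval_X, eval_C]
      refine hrbound _ ⟨?_, ?_⟩ <;> nlinarith
    have hqY : q.eval (-c) = 1 := by
      rw [hq, eval_comp, eval_add, eval_mul, eval_C, eval_X, eval_C]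
      have : (M^2-1)/2 * (-c) + (M^2+1)/2 = 0 := by
        rw [hc]
        field_simp
        ring
      rw [this, hr0]
    have := cheb_growth m q hqdeg e hqb c hc1
    rw [hqY] at this
    simp only [abs_one] at this
    rw [div_le_iff₀ hτpos]
    calc (1:ℝ) ≤ e * (T ℝ (m:ℤ)).eval c := this
      _ = e * τ := by rw [hτ]
  -- the extremal polynomial
  set A : Polynomial ℝ := C (2/(M^2-1)) * X^2 - C c with hA
  set P : Polynomial ℝ := C ((-1:ℝ)^m * τ⁻¹) * ((T ℝ (m:ℤ)).comp A) with hP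
  have hAeval : ∀ x : ℝ, A.eval x = 2/(M^2-1) * x^2 - c := by
    intro x
    rw [hA]
    simp [eval_sub, eval_mul, eval_C, eval_pow, eval_X]
  have hPeval : ∀ x : ℝ, P.eval x = (-1:ℝ)^m * τ⁻¹ * (T ℝ (m:ℤ)).eval (A.eval x) := by
    intro x
    rw [hP, eval_mul, eval_C, eval_comp]
  have hP0 : P.eval 0 = 1 := by
    rw [hPeval 0]
    have hA0 : A.eval 0 = -c := by rw [hAeval]; ring
    rw [hA0, chebT_eval_neg m c, ← hτ]
    rw [← mul_assoc]
    rw [show (-1:ℝ)^m * τ⁻¹ * (-1:ℝ)^m = τ⁻¹ * ((-1)^m * (-1)^m) by ring, ← pow_add,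
      show m + m = 2*m by ring, pow_mul]
    norm_num
    exact inv_mul_cancel₀ (ne_of_gt hτpos)
  have hPdeg : P.natDegree ≤ k := by
    rw [hP]
    refine le_trans (Polynomial.natDegree_C_mul_le _ _) ?_
    refine le_trans (natDegree_comp_le) ?_
    have hA2 : A.natDegree ≤ 2 := by
      rw [hA]; compute_degree
    calc (T ℝ (m:ℤ)).natDegree * A.natDegree ≤ m * 2 :=
        Nat.mul_le_mul (chebT_natDegree_le m) hA2
      _ ≤ k := by omega
  have hPeven : ∀ x : ℝ, P.eval (-x) = P.eval x := by
    intro x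
    rw [hPeval, hPeval, hAeval, hAeval, neg_sq]
  have hPle : ∀ x ∈ E, |P.eval x| ≤ 1/τ := by
    intro x hx
    rw [hPeval, abs_mul, abs_mul, abs_pow, abs_neg, abs_one, one_pow, one_mul,
      abs_inv, abs_of_pos hτpos]
    have hAx : A.eval x ∈ Set.Icc (-1:ℝ) 1 := by
      rw [hAeval]
      obtain ⟨hx1, hx2⟩ := hsq x hx
      have heq : 2/(M^2-1) * x^2 - c = (2*x^2 - (M^2+1))/(M^2-1) := by
        rw [hc]; field_simp
      rw [heq]
      constructor
      · rw [le_div_iff₀ hM2]; nlinarith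
      · rw [div_le_iff₀ hM2]; nlinarith
    have := chebT_abs_le (m:ℤ) _ hAx
    rw [one_div]
    calc τ⁻¹ * |(T ℝ (m:ℤ)).eval (A.eval x)| ≤ τ⁻¹ * 1 :=
        mul_le_mul_of_nonneg_left this (by positivity)
      _ = τ⁻¹ := by ring
  have hPat : P.eval 1 = 1/τ := by
    rw [hPeval]
    have hA1 : A.eval 1 = -1 := by
      rw [hAeval, hc]
      field_simp
      ring
    rw [hA1, show (-1:ℝ) = -(1:ℝ) by norm_num, chebT_eval_neg m 1, chebT_eval_one m]
    have h_1 : ((-1:ℝ)^m) * ((-1:ℝ)^m) = 1 := by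
      rw [← pow_add, show m + m = 2*m by ring, pow_mul]
      norm_num
    calc (-1:ℝ)^m * τ⁻¹ * ((-1:ℝ)^m * 1) = ((-1:ℝ)^m * (-1:ℝ)^m) * τ⁻¹ := by ring
      _ = 1/τ := by rw [h_1, one_div, one_mul]
  have hsupP : (⨆ x : E, |P.eval (x : ℝ)|) = 1 / τ := by
    apply le_antisymm
    · exact ciSup_le fun x => hPle x x.2
    · have h1 : |P.eval 1| ≤ ⨆ x : E, |P.eval (x : ℝ)| := le_ciSup (hbdd P) ⟨1, h1E⟩
      rw [hPat] at h1
      calc 1/τ = |1/τ| := (abs_of_pos (by positivity)).symm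
        _ ≤ _ := h1
  refine ⟨⟨⟨P, hPdeg, hP0, hsupP.symm⟩, ?_⟩, ⟨P, hPdeg, hP0, hPeven, hsupP⟩⟩
  intro e he
  exact hlower e he
end
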